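/- arXiv:1611.03943 — 10 statements merged into one kernel-verified Lean document; each statement's English description precedes it below -/
import Mathlib

section
/- Let G be a finitely generated abelian group and F an algebraically closed field of characteristic zero. Then the map Ψ sending a 2-cocycle ξ ∈ Z²(G, F^×) to the alternating bicharacter β(a,b) = ξ(a,b)ξ(b,a)^{-1} induces a group isomorphism from H²(G, F^×) onto the group of alternating bicharacters ∧²(G, F^×). -/
/-- A 2-cocycle on the abelian group `G` with values in `Fˣ` (trivial action). -/
def IsCocycle {G : Type*} [AddCommGroup G] {F : Type*} [Field F] (ξ : G → G → Fˣ) : Prop :=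
  ∀ a b c : G, ξ a b * ξ (a + b) c = ξ b c * ξ a (b + c)

/-- A bicharacter of `G` with values in `Fˣ`. -/
def IsBichar {G : Type*} [AddCommGroup G] {F : Type*} [Field F] (ξ : G → G → Fˣ) : Prop :=
  (∀ a b c : G, ξ (a + b) c = ξ a c * ξ b c) ∧ (∀ a b c : G, ξ a (b + c) = ξ a b * ξ a c)

/-- An alternating bicharacter of `G`. -/
def IsAltBichar {G : Type*} [AddCommGroup G] {F : Type*} [Field F] (β : G → G → Fˣ) : Prop :=
  IsBichar β ∧ ∀ g : G, β g g = 1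

/-- The map `Ψ`, sending `ξ` to the alternating bicharacter `(a,b) ↦ ξ(a,b)ξ(b,a)⁻¹`. -/
def Psi {G : Type*} [AddCommGroup G] {F : Type*} [Field F] (ξ : G → G → Fˣ) : G → G → Fˣ :=
  fun a b => ξ a b * (ξ b a)⁻¹

/-!
Writing `G ≅ ∏ᵢ ℤ/nᵢ` with cyclic factors, an alternating bicharacter `β` vanishes on each factor,
so it is the "commutator" of its strictly upper-triangular part
`ξ(a, b) = ∏_{i < j} β(aᵢ, bⱼ)`, which is a bicharacter and hence a cocycle; this gives
surjectivity. Two cocycles with the same image differ by a symmetric cocycle, i.e. by an abelian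
extension of `G` by `Fˣ`. Since `F` is algebraically closed, `Fˣ` is divisible, hence injective as
a `ℤ`-module, so that extension splits and the symmetric cocycle is a coboundary.
-/

open Finset

section

variable {G H : Type*} [AddCommGroup G] [AddCommGroup H] {F : Type*} [Field F]

namespace IsCocycle

variable {ξ η : G → G → Fˣ}

lemma comp (hξ : IsCocycle ξ) (f : H →+ G) : IsCocycle fun a b => ξ (f a) (f b) := by
  intro a b c
  simp only [map_add]
  exact hξ _ _ _

lemma div (hξ : IsCocycle ξ) (hη : IsCocycle η) : IsCocycle (ξ / η) := by
  intro a b c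
  simp only [Pi.div_apply]
  rw [div_mul_div_comm, hξ, hη, div_mul_div_comm]

lemma zero_left (hξ : IsCocycle ξ) (b : G) : ξ 0 b = ξ 0 0 := by
  have h := hξ 0 0 b
  simp only [add_zero, zero_add] at h
  exact (mul_right_cancel h).symm

lemma zero_right (hξ : IsCocycle ξ) (a : G) : ξ a 0 = ξ 0 0 := by
  have h := hξ a 0 0
  simp only [add_zero] at h
  exact mul_right_cancel h

end IsCocycle

namespace IsBichar

variable {β : G → G → Fˣ}

lemma isCocycle (hβ : IsBichar β) : IsCocycle β := by
  intro a b c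
  rw [hβ.1, hβ.2]
  ac_rfl

lemma flip (hβ : IsBichar β) : IsBichar fun a b => β b a :=
  ⟨fun a b c => hβ.2 c a b, fun a b c => hβ.1 b c a⟩

lemma comp (hβ : IsBichar β) (f : H →+ G) : IsBichar fun a b => β (f a) (f b) :=
  ⟨fun a b c => by simp only [map_add, hβ.1], fun a b c => by simp only [map_add, hβ.2]⟩

def addHomLeft (hβ : IsBichar β) (b : G) : G →+ Additive Fˣ :=
  AddMonoidHom.mk' (fun a => .ofMul (β a b)) fun a a' => congrArg Additive.ofMul (hβ.1 a a' b)

lemma map_sum_left (hβ : IsBichar β) {ι : Type*} (s : Finset ι) (g : ι → G) (b : G) :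
    β (∑ i ∈ s, g i) b = ∏ i ∈ s, β (g i) b :=
  congrArg Additive.toMul (map_sum (hβ.addHomLeft b) g s)

lemma map_sum_right (hβ : IsBichar β) {ι : Type*} (s : Finset ι) (g : ι → G) (a : G) :
    β a (∑ i ∈ s, g i) = ∏ i ∈ s, β a (g i) :=
  hβ.flip.map_sum_left s g a

lemma map_zsmul_left (hβ : IsBichar β) (m : ℤ) (a b : G) : β (m • a) b = β a b ^ m :=
  congrArg Additive.toMul (map_zsmul (hβ.addHomLeft b) m a)

lemma map_zsmul_right (hβ : IsBichar β) (m : ℤ) (a b : G) : β a (m • b) = β a b ^ m :=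
  hβ.flip.map_zsmul_left m b a

end IsBichar

namespace IsAltBichar

variable {β : G → G → Fˣ}

lemma comp (hβ : IsAltBichar β) (f : H →+ G) : IsAltBichar fun a b => β (f a) (f b) :=
  ⟨hβ.1.comp f, fun a => hβ.2 (f a)⟩

lemma inv_apply (hβ : IsAltBichar β) (a b : G) : (β a b)⁻¹ = β b a := by
  refine inv_eq_of_mul_eq_one_right ?_
  have h := hβ.2 (a + b)
  rwa [hβ.1.1, hβ.1.2, hβ.1.2, hβ.2, hβ.2, one_mul, mul_one] at h

lemma eq_one_of_isAddCyclic [IsAddCyclic G] (hβ : IsAltBichar β) (a b : G) : β a b = 1 := by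
  obtain ⟨g, hg⟩ := IsAddCyclic.exists_generator (α := G)
  obtain ⟨m, rfl⟩ := AddSubgroup.mem_zmultiples_iff.mp (hg a)
  obtain ⟨n, rfl⟩ := AddSubgroup.mem_zmultiples_iff.mp (hg b)
  rw [hβ.1.map_zsmul_left, hβ.1.map_zsmul_right, hβ.2, one_zpow, one_zpow]

end IsAltBichar

lemma psi_inv_apply (ξ : G → G → Fˣ) (a b : G) : (Psi ξ a b)⁻¹ = Psi ξ b a := by
  simp [Psi]

lemma IsCocycle.psi_add_left {ξ : G → G → Fˣ} (hξ : IsCocycle ξ) (a b c : G) :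
    Psi ξ (a + b) c = Psi ξ a c * Psi ξ b c := by
  have h₁ := congrArg Units.val (hξ a b c)
  have h₂ := congrArg Units.val (hξ a c b)
  have h₃ := congrArg Units.val (hξ c a b)
  rw [add_comm c b] at h₂
  rw [add_comm c a] at h₃
  simp only [Units.val_mul] at h₁ h₂ h₃
  ext
  simp only [Psi, Units.val_mul, Units.val_inv_eq_inv_val]
  field_simp
  apply mul_left_cancel₀ (ξ a b).ne_zero
  linear_combination (ξ c a : F) * ξ c b * h₁ - (ξ c a : F) * ξ b c * h₂ +
    (ξ a c : F) * ξ b c * h₃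

lemma IsCocycle.isAltBichar_psi {ξ : G → G → Fˣ} (hξ : IsCocycle ξ) : IsAltBichar (Psi ξ) := by
  refine ⟨⟨hξ.psi_add_left, fun a b c => ?_⟩, fun a => mul_inv_cancel (ξ a a)⟩
  rw [← psi_inv_apply, hξ.psi_add_left, mul_inv, psi_inv_apply, psi_inv_apply]

lemma psi_eq_psi_iff {ξ ξ' : G → G → Fˣ} :
    Psi ξ = Psi ξ' ↔ ∀ a b, (ξ' / ξ) a b = (ξ' / ξ) b a := by
  simp only [funext_iff, Psi, ← div_eq_mul_inv, Pi.div_apply]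
  exact forall₂_congr fun a b => eq_comm.trans div_eq_div_iff_div_eq_div

section UpperTriangular

variable {ι : Type*} [Fintype ι] [LinearOrder ι] {M : ι → Type*} [∀ i, AddCommGroup (M i)]

def upperPart (β : (Π i, M i) → (Π i, M i) → Fˣ) (a b : Π i, M i) : Fˣ :=
  ∏ i, ∏ j, if i < j then β (Pi.single i (a i)) (Pi.single j (b j)) else 1

lemma IsBichar.upperPart {β : (Π i, M i) → (Π i, M i) → Fˣ} (hβ : IsBichar β) :
    IsBichar (upperPart β) := by
  constructor <;> intro a b c <;> simp only [_root_.upperPart, ← prod_mul_distrib] <;>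
    refine prod_congr rfl fun i _ => prod_congr rfl fun j _ => ?_ <;> split_ifs <;>
    simp only [Pi.add_apply, Pi.single_add, hβ.1, hβ.2, mul_one]

lemma IsAltBichar.psi_upperPart [∀ i, IsAddCyclic (M i)] {β : (Π i, M i) → (Π i, M i) → Fˣ}
    (hβ : IsAltBichar β) : Psi (upperPart β) = β := by
  funext a b
  set T : ι → ι → Fˣ := fun i j => β (Pi.single i (a i)) (Pi.single j (b j))
  have diag (i : ι) : T i i = 1 :=
    (hβ.comp (AddMonoidHom.single M i)).eq_one_of_isAddCyclic (a i) (b i)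
  have expand : β a b = ∏ i, ∏ j, T i j := by
    conv_lhs => rw [← univ_sum_single a, ← univ_sum_single b]
    simp only [hβ.1.map_sum_left, hβ.1.map_sum_right, T]
  have lower : (upperPart β b a)⁻¹ = ∏ i, ∏ j, if j < i then T i j else 1 := by
    simp only [upperPart, ← prod_inv_distrib, apply_ite Inv.inv, inv_one, hβ.inv_apply]
    exact prod_comm
  rw [Psi, lower, expand, upperPart, ← prod_mul_distrib]
  refine prod_congr rfl fun i _ => ?_
  rw [← prod_mul_distrib]
  refine prod_congr rfl fun j _ => ?_
  rcases lt_trichotomy i j with h | rfl | h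
  · simp [h, h.not_gt, T]
  · simp [diag]
  · simp [h, h.not_gt, T]

end UpperTriangular

variable (G) in
lemma AddCommGroup.exists_addEquiv_pi_zmod [AddGroup.FG G] :
    ∃ (k : ℕ) (n : Fin k → ℕ), Nonempty (G ≃+ Π i, ZMod (n i)) := by
  obtain ⟨m, ι, _, p, -, e, ⟨f⟩⟩ := AddCommGroup.equiv_free_prod_directSum_zmod G
  let n : Fin m ⊕ ι → ℕ := Sum.elim 0 fun i => p i ^ e i
  let σ := Fintype.equivFin (Fin m ⊕ ι)
  exact ⟨_, n ∘ σ.symm, ⟨f.trans <|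
    ((Finsupp.addEquivFunOnFinite.prodCongr (DirectSum.addEquivProd _)).trans
      (LinearEquiv.sumPiEquivProdPi ℤ _ _ fun x => ZMod (n x)).symm.toAddEquiv).trans
    (LinearEquiv.piCongrLeft' ℤ (fun x => ZMod (n x)) σ).toAddEquiv⟩⟩

lemma IsAltBichar.exists_isCocycle_psi_eq [AddGroup.FG G] {β : G → G → Fˣ} (hβ : IsAltBichar β) :
    ∃ ξ : G → G → Fˣ, IsCocycle ξ ∧ Psi ξ = β := by
  obtain ⟨k, n, ⟨e⟩⟩ := AddCommGroup.exists_addEquiv_pi_zmod G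
  have hβ' := hβ.comp e.symm.toAddMonoidHom
  refine ⟨fun a b => upperPart _ (e a) (e b), hβ'.1.upperPart.isCocycle.comp e.toAddMonoidHom, ?_⟩
  funext a b
  exact (congrFun₂ hβ'.psi_upperPart (e a) (e b)).trans (by simp)

section SymmetricCocycle

variable {c : G → G → Fˣ}

abbrev IsCocycle.extCommGroup (hc : IsCocycle c) (hs : ∀ a b, c a b = c b a) :
    CommGroup (Fˣ × G) where
  mul x y := (x.1 * y.1 * c x.2 y.2, x.2 + y.2)
  one := ((c 0 0)⁻¹, 0)
  inv x := ((c 0 0)⁻¹ / (x.1 * c (-x.2) x.2), -x.2)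
  mul_assoc := by
    rintro ⟨x, a⟩ ⟨y, b⟩ ⟨z, d⟩
    refine Prod.ext ?_ (add_assoc a b d)
    calc x * y * c a b * z * c (a + b) d = x * y * z * (c a b * c (a + b) d) := by ac_rfl
      _ = x * (y * z * c b d) * c a (b + d) := by rw [hc]; ac_rfl
  one_mul := by
    rintro ⟨x, a⟩
    refine Prod.ext ?_ (zero_add a)
    show (c 0 0)⁻¹ * x * c 0 a = x
    rw [hc.zero_left a, mul_comm _ x, inv_mul_cancel_right]
  mul_one := by
    rintro ⟨x, a⟩
    refine Prod.ext ?_ (add_zero a)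
    show x * (c 0 0)⁻¹ * c a 0 = x
    rw [hc.zero_right a, inv_mul_cancel_right]
  inv_mul_cancel := by
    rintro ⟨x, a⟩
    refine Prod.ext ?_ (neg_add_cancel a)
    show (c 0 0)⁻¹ / (x * c (-a) a) * x * c (-a) a = (c 0 0)⁻¹
    rw [mul_assoc, div_mul_cancel]
  mul_comm := by
    rintro ⟨x, a⟩ ⟨y, b⟩
    refine Prod.ext ?_ (add_comm a b)
    show x * y * c a b = y * x * c b a
    rw [mul_comm x y, hs]

lemma IsCocycle.exists_coboundary_of_symm (hF : Module.Baer ℤ (Additive Fˣ)) (hc : IsCocycle c)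
    (hs : ∀ a b, c a b = c b a) : ∃ μ : G → Fˣ, ∀ a b, c a b = μ a * μ b * (μ (a + b))⁻¹ := by
  let _ := hc.extCommGroup hs
  let incl : Fˣ →* Fˣ × G := MonoidHom.mk' (fun v => (v * (c 0 0)⁻¹, 0)) fun v w => by
    refine Prod.ext ?_ (add_zero 0).symm
    show v * w * (c 0 0)⁻¹ = v * (c 0 0)⁻¹ * (w * (c 0 0)⁻¹) * c 0 0
    rw [mul_mul_mul_comm, mul_assoc (v * w), inv_mul_cancel_right]
  have hincl : Function.Injective incl := fun v w h => mul_right_cancel (congrArg Prod.fst h)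
  obtain ⟨r, hr⟩ :=
    hF.extension_property_addMonoidHom (MonoidHom.toAdditive incl) hincl (AddMonoidHom.id _)
  let ρ : Fˣ × G →* Fˣ := MonoidHom.toAdditive.symm r
  have hρ (v : Fˣ) : ρ (incl v) = v := DFunLike.congr_fun hr (Additive.ofMul v)
  refine ⟨fun a => ρ (1, a), fun a b => eq_mul_inv_of_mul_eq ?_⟩
  -- `c` measures the failure of the section `a ↦ (1, a)` to be a homomorphism.
  have hsection : ((1, a) : Fˣ × G) * (1, b) = incl (c a b) * (1, a + b) := by
    refine Prod.ext ?_ (zero_add _).symm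
    show 1 * 1 * c a b = c a b * (c 0 0)⁻¹ * 1 * c 0 (a + b)
    rw [hc.zero_left (a + b), one_mul, one_mul, mul_one, inv_mul_cancel_right]
  rw [← hρ (c a b), ← map_mul, ← hsection, map_mul]

lemma IsCocycle.exists_coboundary_iff_symm (hF : Module.Baer ℤ (Additive Fˣ)) (hc : IsCocycle c) :
    (∃ μ : G → Fˣ, ∀ a b, c a b = μ a * μ b * (μ (a + b))⁻¹) ↔ ∀ a b, c a b = c b a :=
  ⟨fun ⟨μ, hμ⟩ a b => by rw [hμ, hμ, mul_comm (μ a), add_comm], hc.exists_coboundary_of_symm hF⟩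

end SymmetricCocycle

lemma IsAlgClosed.surjective_pow_units [IsAlgClosed F] {n : ℕ} (hn : n ≠ 0) :
    Function.Surjective fun u : Fˣ => u ^ n := fun u => by
  obtain ⟨z, hz⟩ := IsAlgClosed.exists_pow_nat_eq (u : F) (Nat.pos_of_ne_zero hn)
  have hz0 : z ≠ 0 := by rintro rfl; exact u.ne_zero (hz ▸ zero_pow hn)
  exact ⟨Units.mk0 z hz0, Units.ext hz⟩

lemma IsAlgClosed.baer_additive_units [IsAlgClosed F] : Module.Baer ℤ (Additive Fˣ) :=
  let _ : DivisibleBy (Additive Fˣ) ℕ := divisibleByOfSMulRightSurj _ _ surjective_pow_units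
  let _ := AddGroup.divisibleByIntOfDivisibleByNat (Additive Fˣ)
  Module.Baer.of_divisible _

end

theorem psi_induces_iso_H2_to_alternating_general
    {G : Type*} [AddCommGroup G] [AddGroup.FG G]
    {F : Type*} [Field F] [IsAlgClosed F] :
    (∀ ξ : G → G → Fˣ, IsCocycle ξ → IsAltBichar (Psi ξ)) ∧
    (∀ β : G → G → Fˣ, IsAltBichar β → ∃ ξ : G → G → Fˣ, IsCocycle ξ ∧ Psi ξ = β) ∧
    (∀ ξ ξ' : G → G → Fˣ, IsCocycle ξ → IsCocycle ξ' →
      (Psi ξ = Psi ξ' ↔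
        ∃ μ : G → Fˣ, ∀ a b : G, ξ' a b = ξ a b * (μ a * μ b * (μ (a + b))⁻¹))) := by
  refine ⟨fun ξ hξ => hξ.isAltBichar_psi, fun β hβ => hβ.exists_isCocycle_psi_eq,
    fun ξ ξ' hξ hξ' => ?_⟩
  rw [psi_eq_psi_iff, ← (hξ'.div hξ).exists_coboundary_iff_symm IsAlgClosed.baer_additive_units]
  simp only [Pi.div_apply, div_eq_iff_eq_mul']

/-- The map `Ψ` sends 2-cocycles to alternating bicharacters, is surjective onto the
alternating bicharacters, and two 2-cocycles have the same image iff they are cohomologous: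
i.e. `Ψ` induces a (group) isomorphism `H²(G,Fˣ) ≅ ∧²(G,Fˣ)`. -/
theorem psi_induces_iso_H2_to_alternating
    {G : Type*} [AddCommGroup G] [AddGroup.FG G]
    {F : Type*} [Field F] [IsAlgClosed F] [CharZero F] :
    (∀ ξ : G → G → Fˣ, IsCocycle ξ → IsAltBichar (Psi ξ)) ∧
    (∀ β : G → G → Fˣ, IsAltBichar β → ∃ ξ : G → G → Fˣ, IsCocycle ξ ∧ Psi ξ = β) ∧
    (∀ ξ ξ' : G → G → Fˣ, IsCocycle ξ → IsCocycle ξ' →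
      (Psi ξ = Psi ξ' ↔
        ∃ μ : G → Fˣ, ∀ a b : G, ξ' a b = ξ a b * (μ a * μ b * (μ (a + b))⁻¹))) :=
  psi_induces_iso_H2_to_alternating_general
end

section
/- Let G be a finitely generated abelian group and F an algebraically closed field of characteristic zero. The map Ψ: L²(G,F^×) → ∧²(G,F^×), Ψ(ξ)(a,b) = ξ(a,b)ξ(b,a)^{-1}, restricted to bicharacters (Z-bilinear maps G × G → F^×), is surjective onto the alternating bicharacters, with kernel the symmetric bicharacters; i.e., there is a short exact sequence 1 → Sym²(G,F^×) → L²(G,F^×) → ∧²(G,F^×) → 1. -/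
section Bicharacter

variable {G G' M : Type*} [AddCommGroup G] [AddCommGroup G'] [CommGroup M]

def IsBicharacter (ξ : G → G → M) : Prop :=
  (∀ a b c : G, ξ (a + b) c = ξ a c * ξ b c) ∧ (∀ a b c : G, ξ a (b + c) = ξ a b * ξ a c)

variable (G M) in
def AlternatingLifts : Prop :=
  ∀ β : G → G → M, IsBicharacter β → (∀ g, β g g = 1) →
    ∃ ξ : G → G → M, IsBicharacter ξ ∧ ∀ a b, ξ a b * (ξ b a)⁻¹ = β a b

namespace IsBicharacter

variable {ξ η β : G → G → M}

theorem comp (h : IsBicharacter ξ) (f g : G' →+ G) : IsBicharacter fun a b => ξ (f a) (g b) :=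
  ⟨fun a b c => by simp only [map_add, h.1], fun a b c => by simp only [map_add, h.2]⟩

theorem mul (hξ : IsBicharacter ξ) (hη : IsBicharacter η) : IsBicharacter fun a b => ξ a b * η a b :=
  ⟨fun a b c => by simp only [hξ.1, hη.1, mul_mul_mul_comm],
    fun a b c => by simp only [hξ.2, hη.2, mul_mul_mul_comm]⟩

theorem inv (h : IsBicharacter ξ) : IsBicharacter fun a b => (ξ a b)⁻¹ :=
  ⟨fun a b c => by simp only [h.1, mul_inv], fun a b c => by simp only [h.2, mul_inv]⟩

theorem flip (h : IsBicharacter ξ) : IsBicharacter (Function.swap ξ) :=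
  ⟨fun a b c => h.2 c a b, fun a b c => h.1 b c a⟩

theorem map_zsmul_left (h : IsBicharacter ξ) (k : ℤ) (a b : G) : ξ (k • a) b = ξ a b ^ k :=
  map_zsmul (AddMonoidHom.mk' (fun a => Additive.ofMul (ξ a b)) (h.1 · · b)) k a

theorem map_zsmul_right (h : IsBicharacter ξ) (k : ℤ) (a b : G) : ξ a (k • b) = ξ a b ^ k :=
  h.flip.map_zsmul_left k b a

theorem mul_swap_eq_one (h : IsBicharacter β) (hβ : ∀ g, β g g = 1) (a b : G) :
    β a b * β b a = 1 := by
  simpa only [h.1, h.2, hβ, one_mul, mul_one] using hβ (a + b)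

theorem eq_one_of_isAddCyclic [IsAddCyclic G] (h : IsBicharacter β) (hβ : ∀ g, β g g = 1)
    (a b : G) : β a b = 1 := by
  obtain ⟨g, hg⟩ := IsAddCyclic.exists_generator (α := G)
  obtain ⟨k, rfl⟩ := AddSubgroup.mem_zmultiples_iff.mp (hg a)
  obtain ⟨l, rfl⟩ := AddSubgroup.mem_zmultiples_iff.mp (hg b)
  rw [h.map_zsmul_left, h.map_zsmul_right, hβ, one_zpow, one_zpow]

theorem apply_prod {β : G × G' → G × G' → M} (h : IsBicharacter β) (a b : G × G') :
    β a b = β (a.1, 0) (b.1, 0) * β (a.1, 0) (0, b.2) * β (0, a.2) (b.1, 0) *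
      β (0, a.2) (0, b.2) := by
  conv_lhs => rw [← Prod.fst_add_snd a, ← Prod.fst_add_snd b]
  simp only [h.1, h.2, mul_assoc]

end IsBicharacter

namespace AlternatingLifts

theorem of_isAddCyclic [IsAddCyclic G] : AlternatingLifts G M := fun β h hβ =>
  ⟨fun _ _ => 1, ⟨fun _ _ _ => (mul_one 1).symm, fun _ _ _ => (mul_one 1).symm⟩,
    fun a b => by rw [h.eq_one_of_isAddCyclic hβ, inv_one, mul_one]⟩

theorem of_addEquiv (e : G ≃+ G') (hG : AlternatingLifts G M) : AlternatingLifts G' M := by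
  intro β h hβ
  obtain ⟨ξ, hξ, hψ⟩ := hG _ (h.comp e e) fun g => hβ (e g)
  refine ⟨fun a b => ξ (e.symm a) (e.symm b),
    hξ.comp e.symm.toAddMonoidHom e.symm.toAddMonoidHom, fun a b => ?_⟩
  simpa using hψ (e.symm a) (e.symm b)

theorem prod (hG : AlternatingLifts G M) (hG' : AlternatingLifts G' M) :
    AlternatingLifts (G × G') M := by
  intro β h hβ
  obtain ⟨ξ₁, hξ₁, hψ₁⟩ := hG _ (h.comp (.inl G G') (.inl G G')) fun g => hβ (g, 0)
  obtain ⟨ξ₂, hξ₂, hψ₂⟩ := hG' _ (h.comp (.inr G G') (.inr G G')) fun g => hβ (0, g)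
  refine ⟨fun a b => ξ₁ a.1 b.1 * ξ₂ a.2 b.2 * β (a.1, 0) (0, b.2), ?_, fun a b => ?_⟩
  · exact ((hξ₁.comp (.fst G G') (.fst G G')).mul (hξ₂.comp (.snd G G') (.snd G G'))).mul
      (h.comp ((AddMonoidHom.inl G G').comp (.fst G G')) ((AddMonoidHom.inr G G').comp (.snd G G')))
  · have skew := h.mul_swap_eq_one hβ (0, a.2) (b.1, 0)
    simp only [AddMonoidHom.inl_apply, AddMonoidHom.inr_apply] at hψ₁ hψ₂
    rw [h.apply_prod, ← hψ₁, ← hψ₂, eq_inv_of_mul_eq_one_left skew]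
    simp only [mul_inv]
    ac_rfl

theorem pi {ι : Type*} [Finite ι] {H : ι → Type*} [∀ i, AddCommGroup (H i)]
    (hH : ∀ i, AlternatingLifts (H i) M) : AlternatingLifts (∀ i, H i) M := by
  refine Finite.induction_empty_option
    (P := fun ι => ∀ (H : ι → Type _) [∀ i, AddCommGroup (H i)],
      (∀ i, AlternatingLifts (H i) M) → AlternatingLifts (∀ i, H i) M) ?_ ?_ ?_ ι H hH
  · intro α β e hα H _ hH
    exact (hα (fun a => H (e a)) fun a => hH (e a)).of_addEquiv
      (LinearEquiv.piCongrLeft ℤ H e).toAddEquiv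
  · intro H _ _
    exact of_isAddCyclic
  · intro α _ hα H _ hH
    exact ((hH none).prod (hα _ fun a => hH (some a))).of_addEquiv
      (LinearEquiv.piOptionEquivProd (R := ℤ)).toAddEquiv.symm

theorem of_fg [AddGroup.FG G] : AlternatingLifts G M := by
  obtain ⟨n, ι, _, p, -, e, ⟨f⟩⟩ := AddCommGroup.equiv_free_prod_directSum_zmod G
  have free : AlternatingLifts (Fin n →₀ ℤ) M :=
    (pi fun _ => of_isAddCyclic).of_addEquiv Finsupp.addEquivFunOnFinite.symm
  have torsion : AlternatingLifts (DirectSum ι fun i => ZMod (p i ^ e i)) M :=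
    (pi fun _ => of_isAddCyclic).of_addEquiv (DirectSum.addEquivProd _).symm
  exact (free.prod torsion).of_addEquiv f.symm

end AlternatingLifts

end Bicharacter

theorem psi_short_exact_on_bicharacters_general
    {G : Type*} [AddCommGroup G] [AddGroup.FG G]
    {F : Type*} [Field F] :
    (∀ ξ : G → G → Fˣ, IsBichar ξ → IsAltBichar (Psi ξ)) ∧
    (∀ β : G → G → Fˣ, IsAltBichar β → ∃ ξ : G → G → Fˣ, IsBichar ξ ∧ Psi ξ = β) ∧
    (∀ ξ : G → G → Fˣ, IsBichar ξ →
      ((∀ a b : G, Psi ξ a b = 1) ↔ ∀ a b : G, ξ a b = ξ b a)) := by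
  refine ⟨fun ξ hξ => ⟨IsBicharacter.mul hξ (IsBicharacter.flip hξ).inv, fun _ => mul_inv_cancel _⟩,
    fun β hβ => ?_, fun ξ _ => by simp only [Psi, mul_inv_eq_one]⟩
  obtain ⟨ξ, hξ, hψ⟩ := AlternatingLifts.of_fg β hβ.1 hβ.2
  exact ⟨ξ, hξ, funext₂ hψ⟩

/-- The short exact sequence `1 → Sym²(G,Fˣ) → L²(G,Fˣ) → ∧²(G,Fˣ) → 1`:
`Ψ` maps bicharacters to alternating bicharacters, is surjective onto the alternating
bicharacters, and its kernel consists exactly of the symmetric bicharacters. -/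
theorem psi_short_exact_on_bicharacters
    {G : Type*} [AddCommGroup G] [AddGroup.FG G]
    {F : Type*} [Field F] [IsAlgClosed F] [CharZero F] :
    (∀ ξ : G → G → Fˣ, IsBichar ξ → IsAltBichar (Psi ξ)) ∧
    (∀ β : G → G → Fˣ, IsAltBichar β → ∃ ξ : G → G → Fˣ, IsBichar ξ ∧ Psi ξ = β) ∧
    (∀ ξ : G → G → Fˣ, IsBichar ξ →
      ((∀ a b : G, Psi ξ a b = 1) ↔ ∀ a b : G, ξ a b = ξ b a)) :=
  psi_short_exact_on_bicharacters_general
end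

section
/- Let G = ⊕_{i=1}^k Z a_i be a finite abelian group with ord(a_i) = n_i, and β an alternating bicharacter on G with values in F^×. Define ξ on generators by ξ(a_i,a_j) = 1 if i ≤ j and ξ(a_i,a_j) = β(a_i,a_j) if i > j, extended bilinearly. Then ξ is a bicharacter with Ψ(ξ) = β, i.e., ξ(a,b)ξ(b,a)^{-1} = β(a,b) for all a,b ∈ G. -/
/-!
Both `ξ` and `Ψ(ξ)` are bicharacters, so `Ψ(ξ) = β` only has to be checked on pairs of
elements `x ∈ Aᵢ`, `y ∈ Aⱼ` of the direct summands. For `i ≠ j` exactly one of `ξ(x, y)`,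
`ξ(y, x)` is a value of `β` and the other is `1`, and `β(y, x)⁻¹ = β(x, y)` since `β` is
alternating. For `i = j` both sides are `1`: an alternating bicharacter is trivial on a cyclic
group, because there `β(m • g, l • g) = β(g, g) ^ (m * l)`.
-/

section Bicharacter

variable {G H : Type*} [AddCommGroup G] [AddCommGroup H] {F : Type*} [Field F]
  {β : G → G → Fˣ}

def IsBichar.toAddMonoidHom (hβ : IsBichar β) : G →+ G →+ Additive Fˣ :=
  AddMonoidHom.mk' (fun a => AddMonoidHom.mk' (fun b => Additive.ofMul (β a b)) (hβ.2 a))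
    fun a a' => AddMonoidHom.ext fun b => hβ.1 a a' b

lemma IsBichar.toAddMonoidHom_apply (hβ : IsBichar β) (a b : G) :
    hβ.toAddMonoidHom a b = Additive.ofMul (β a b) :=
  rfl

lemma IsBichar.map_zero_left (hβ : IsBichar β) (b : G) : β 0 b = 1 :=
  Additive.ofMul.injective (DFunLike.congr_fun (map_zero hβ.toAddMonoidHom) b)

lemma IsBichar.map_zero_right (hβ : IsBichar β) (a : G) : β a 0 = 1 :=
  Additive.ofMul.injective (map_zero (hβ.toAddMonoidHom a))

lemma isBichar_one : IsBichar (fun _ _ : G => (1 : Fˣ)) :=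
  ⟨fun _ _ _ => (mul_one 1).symm, fun _ _ _ => (mul_one 1).symm⟩

lemma IsBichar.finset_prod {ι : Type*} (s : Finset ι) {ξ : ι → G → G → Fˣ}
    (h : ∀ i ∈ s, IsBichar (ξ i)) : IsBichar (fun a b => ∏ i ∈ s, ξ i a b) :=
  ⟨fun a a' b => by
    rw [← Finset.prod_mul_distrib]; exact Finset.prod_congr rfl fun i hi => (h i hi).1 a a' b,
   fun a b b' => by
    rw [← Finset.prod_mul_distrib]; exact Finset.prod_congr rfl fun i hi => (h i hi).2 a b b'⟩

lemma IsBichar.psi (hβ : IsBichar β) : IsBichar (Psi β) := by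
  constructor <;> intro a b c <;> simp only [Psi, hβ.1, hβ.2, mul_inv] <;> ac_rfl

lemma IsAltBichar.comp_s2 (hβ : IsAltBichar β) (f : H →+ G) :
    IsAltBichar (fun a b => β (f a) (f b)) :=
  ⟨⟨fun a a' b => by simp only [map_add, hβ.1.1], fun a b b' => by simp only [map_add, hβ.1.2]⟩,
    fun a => hβ.2 (f a)⟩

lemma IsAltBichar.apply_swap (hβ : IsAltBichar β) (a b : G) :
    β b a = (β a b)⁻¹ := by
  have h := hβ.2 (a + b)
  rw [hβ.1.1, hβ.1.2, hβ.1.2, hβ.2 a, hβ.2 b, one_mul, mul_one] at h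
  exact eq_inv_of_mul_eq_one_right h

lemma IsAltBichar.apply_zsmul_zsmul (hβ : IsAltBichar β) (m l : ℤ) (g : G) :
    β (m • g) (l • g) = 1 := by
  obtain ⟨hb, halt⟩ := hβ
  apply Additive.ofMul.injective
  calc Additive.ofMul (β (m • g) (l • g)) = (l * m) • hb.toAddMonoidHom g g := by
        rw [← hb.toAddMonoidHom_apply, map_zsmul, map_zsmul hb.toAddMonoidHom,
          AddMonoidHom.zsmul_apply, smul_smul]
    _ = 0 := by rw [hb.toAddMonoidHom_apply, halt, ofMul_one, smul_zero]

lemma IsAltBichar.apply_eq_one_of_isAddCyclic [IsAddCyclic G] (hβ : IsAltBichar β)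
    (a b : G) : β a b = 1 := by
  obtain ⟨g, hg⟩ := IsAddCyclic.exists_generator (α := G)
  obtain ⟨m, rfl⟩ := AddSubgroup.mem_zmultiples_iff.mp (hg a)
  obtain ⟨l, rfl⟩ := AddSubgroup.mem_zmultiples_iff.mp (hg b)
  exact hβ.apply_zsmul_zsmul m l g

end Bicharacter

section Pi

variable {ι : Type*} [DecidableEq ι] {A : ι → Type*} [∀ i, AddCommGroup (A i)]
  {F : Type*} [Field F] {β : (∀ i, A i) → (∀ i, A i) → Fˣ}

lemma IsBichar.ext_pi [Finite ι] {γ : (∀ i, A i) → (∀ i, A i) → Fˣ} (hβ : IsBichar β)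
    (hγ : IsBichar γ) (h : ∀ i j (x : A i) (y : A j),
      β (Pi.single i x) (Pi.single j y) = γ (Pi.single i x) (Pi.single j y)) :
    β = γ := by
  have hhom : hβ.toAddMonoidHom = hγ.toAddMonoidHom :=
    AddMonoidHom.functions_ext _ _ _ fun i x =>
      AddMonoidHom.functions_ext _ _ _ fun j y => congrArg Additive.ofMul (h i j x y)
  funext a b
  exact Additive.ofMul.injective (DFunLike.congr_fun (DFunLike.congr_fun hhom a) b)

lemma IsAltBichar.apply_single_single_self (hβ : IsAltBichar β) (i : ι) [IsAddCyclic (A i)]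
    (x y : A i) : β (Pi.single i x) (Pi.single i y) = 1 :=
  (hβ.comp_s2 (AddMonoidHom.single A i)).apply_eq_one_of_isAddCyclic x y

lemma IsBichar.comp_single_eval (hβ : IsBichar β) (i j : ι) :
    IsBichar (fun a b : ∀ i, A i => β (Pi.single i (a i)) (Pi.single j (b j))) :=
  ⟨fun a a' b => by simp only [Pi.add_apply, Pi.single_add, hβ.1],
    fun a b b' => by simp only [Pi.add_apply, Pi.single_add, hβ.2]⟩

variable [Fintype ι] [LinearOrder ι]

def lowerTriangularBichar (β : (∀ i, A i) → (∀ i, A i) → Fˣ) (a b : ∀ i, A i) : Fˣ :=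
  ∏ i, ∏ j, if j < i then β (Pi.single i (a i)) (Pi.single j (b j)) else 1

lemma IsBichar.lowerTriangularBichar (hβ : IsBichar β) : IsBichar (lowerTriangularBichar β) :=
  IsBichar.finset_prod _ fun i _ => IsBichar.finset_prod _ fun j _ => by
    by_cases h : j < i
    · simpa only [h, if_true] using hβ.comp_single_eval i j
    · simpa only [h, if_false] using isBichar_one

lemma lowerTriangularBichar_single_single (hβ : IsBichar β) (i j : ι) (x : A i) (y : A j) :
    lowerTriangularBichar β (Pi.single i x) (Pi.single j y) =
      if j < i then β (Pi.single i x) (Pi.single j y) else 1 := by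
  rw [lowerTriangularBichar,
    Fintype.prod_eq_single i fun i' hi' => Finset.prod_eq_one fun j' _ => by
      simp [Pi.single_eq_of_ne hi', hβ.map_zero_left],
    Fintype.prod_eq_single j fun j' hj' => by simp [Pi.single_eq_of_ne hj', hβ.map_zero_right]]
  simp only [Pi.single_eq_same]

lemma psi_lowerTriangularBichar (hβ : IsAltBichar β)
    (hdiag : ∀ i (x y : A i), β (Pi.single i x) (Pi.single i y) = 1) :
    Psi (lowerTriangularBichar β) = β := by
  refine hβ.1.lowerTriangularBichar.psi.ext_pi hβ.1 fun i j x y => ?_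
  simp only [Psi, lowerTriangularBichar_single_single hβ.1]
  rcases lt_trichotomy i j with hij | rfl | hji
  · rw [if_neg hij.not_gt, if_pos hij, one_mul, hβ.apply_swap, inv_inv]
  · simp [hdiag]
  · rw [if_pos hji, if_neg hji.not_gt, inv_one, mul_one]

end Pi

theorem exists_bicharacter_section_general
    {F : Type*} [Field F]
    (k : ℕ) (n : Fin k → ℕ)
    (β : (∀ i : Fin k, ZMod (n i)) → (∀ i : Fin k, ZMod (n i)) → Fˣ)
    (hβ : IsAltBichar β)
    (ξ : (∀ i : Fin k, ZMod (n i)) → (∀ i : Fin k, ZMod (n i)) → Fˣ)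
    (hξ : ∀ a b, ξ a b = ∏ i : Fin k, ∏ j : Fin k,
        if j < i then β (Pi.single i (a i)) (Pi.single j (b j)) else 1) :
    IsBichar ξ ∧
    (∀ i j : Fin k, ξ (Pi.single i 1) (Pi.single j 1) =
        if i ≤ j then 1 else β (Pi.single i 1) (Pi.single j 1)) ∧
    (∀ a b, Psi ξ a b = β a b) := by
  obtain rfl : ξ = lowerTriangularBichar β := funext₂ hξ
  refine ⟨hβ.1.lowerTriangularBichar, fun i j => ?_, fun a b => ?_⟩
  · rw [lowerTriangularBichar_single_single hβ.1, ← ite_not]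
    simp only [not_lt]
  · exact congrFun₂ (psi_lowerTriangularBichar hβ fun i => hβ.apply_single_single_self i) a b

/-- Let `G = ⊕_{i=1}^k ℤ aᵢ` be a finite abelian group (realized as `∀ i, ZMod (n i)`,
with generators the standard "basis vectors" `Pi.single i 1` of respective orders `n i`),
and `β` an alternating bicharacter on `G`.  The map `ξ` obtained by setting
`ξ(aᵢ,aⱼ) = 1` for `i ≤ j` and `ξ(aᵢ,aⱼ) = β(aᵢ,aⱼ)` for `i > j` and extending bilinearly
is a bicharacter with `Ψ(ξ) = β`, i.e. `ξ(a,b)ξ(b,a)⁻¹ = β(a,b)` for all `a b`. -/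
theorem exists_bicharacter_section
    {F : Type*} [Field F] [IsAlgClosed F] [CharZero F]
    (k : ℕ) (n : Fin k → ℕ) (hn : ∀ i, 0 < n i)
    (β : (∀ i : Fin k, ZMod (n i)) → (∀ i : Fin k, ZMod (n i)) → Fˣ)
    (hβ : IsAltBichar β)
    (ξ : (∀ i : Fin k, ZMod (n i)) → (∀ i : Fin k, ZMod (n i)) → Fˣ)
    (hξ : ∀ a b, ξ a b = ∏ i : Fin k, ∏ j : Fin k,
        if j < i then β (Pi.single i (a i)) (Pi.single j (b j)) else 1) :
    IsBichar ξ ∧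
    (∀ i j : Fin k, ξ (Pi.single i 1) (Pi.single j 1) =
        if i ≤ j then 1 else β (Pi.single i 1) (Pi.single j 1)) ∧
    (∀ a b, Psi ξ a b = β a b) :=
  exists_bicharacter_section_general k n β hβ ξ hξ
end

section
/- Let G be a finite abelian group with generators a_1,…,a_k of orders n_1,…,n_k (G = ⊕ Z a_i), β an alternating bicharacter on G, and ξ the bicharacter with ξ(a_i,a_j)=1 for i≤j and β(a_i,a_j) for i>j. Then the twisted group algebra F^ξ G is isomorphic to the associative F-algebra generated by x_1,…,x_k subject to relations x_i x_j = β(a_i,a_j) x_j x_i and x_i^{n_i} = 1. -/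
/-!
Sending `xᵢ ↦ u_{aᵢ}` respects the relations, since `ξ(aᵢ,aⱼ) = β(aᵢ,aⱼ) ξ(aⱼ,aᵢ)` and
`ξ(aᵢ,aᵢ) = 1`. In the quotient, `xᵢ` times an ordered monomial `x₁^{e₁} ⋯ x_k^{e_k}`
(`0 ≤ eⱼ < nⱼ`) is a unit multiple of another such monomial, because the `xⱼ` commute up to
units and `xᵢ^{nᵢ} = 1`; so these `|G|` monomials span the quotient. Their images are unit
multiples of the basis vectors `u_g`, so the map carries a spanning family onto a basis and is
bijective.
-/

theorem LinearMap.bijective_of_map_eq_basis {R M N ι : Type*} [Ring R] [AddCommGroup M]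
    [Module R M] [AddCommGroup N] [Module R N] (f : M →ₗ[R] N) {w : ι → M}
    (hw : Submodule.span R (Set.range w) = ⊤) (b : Module.Basis ι R N) (h : ∀ i, f (w i) = b i) :
    Function.Bijective f := by
  have hli : LinearIndependent R w :=
    LinearIndependent.of_comp f (by simpa [Function.comp_def, h] using b.linearIndependent)
  let bw := Module.Basis.mk hli hw.ge
  have hf : f = (bw.equiv b (Equiv.refl ι)).toLinearMap := bw.ext fun i => by
    rw [LinearEquiv.coe_coe, Module.Basis.equiv_apply, Equiv.refl_apply, Module.Basis.mk_apply, h]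
  rw [hf]
  exact (bw.equiv b (Equiv.refl ι)).bijective

theorem Algebra.span_range_eq_top_of_mul_mem {R A ι : Type*} [CommSemiring R] [Semiring A]
    [Algebra R A] {s : Set A} (hs : Algebra.adjoin R s = ⊤) {m : ι → A}
    (h1 : (1 : A) ∈ Submodule.span R (Set.range m))
    (hmul : ∀ x ∈ s, ∀ i, x * m i ∈ Submodule.span R (Set.range m)) :
    Submodule.span R (Set.range m) = ⊤ := by
  have hstable : ∀ x ∈ s, ∀ y ∈ Submodule.span R (Set.range m),
      x * y ∈ Submodule.span R (Set.range m) := by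
    intro x hx y hy
    induction hy using Submodule.span_induction with
    | mem y hy => obtain ⟨i, rfl⟩ := hy; exact hmul x hx i
    | zero => simp
    | add y z _ _ hy hz => rw [mul_add]; exact add_mem hy hz
    | smul r y _ hy => rw [mul_smul_comm]; exact Submodule.smul_mem _ r hy
  refine Submodule.eq_top_iff'.mpr fun a => ?_
  have ha : a ∈ Subalgebra.toSubmodule (Algebra.adjoin R s) := by rw [hs]; trivial
  rw [Algebra.adjoin_eq_span] at ha
  refine Submodule.span_le.mpr (fun x hx => ?_) ha
  induction hx using Submonoid.closure_induction_left with
  | one => exact h1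
  | mul_left z hz y _ hy => exact hstable z hz y hy

section QuasiCommuting

variable {F R : Type*} [CommSemiring F] [Semiring R] [Algebra F R]

theorem mul_pow_eq_units_smul {x z : R} {c : Fˣ} (h : x * z = (c : F) • (z * x)) (e : ℕ) :
    x * z ^ e = ((c ^ e : Fˣ) : F) • (z ^ e * x) := by
  induction e with
  | zero => simp
  | succ e ih =>
    rw [pow_succ, ← mul_assoc, ih, smul_mul_assoc, mul_assoc, h, mul_smul_comm, smul_smul,
      ← mul_assoc, ← pow_succ, pow_succ c, Units.val_mul]

theorem exists_mul_list_prod_pow_eq {ι : Type*} {y : ι → R}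
    (hcomm : ∀ i j, ∃ c : Fˣ, y i * y j = (c : F) • (y j * y i))
    {e e' : ι → ℕ} {i : ι} (he : ∀ j ≠ i, e' j = e j) (hi : y i * y i ^ e i = y i ^ e' i)
    {l : List ι} (hl : l.Nodup) (hil : i ∈ l) :
    ∃ c : Fˣ, y i * (l.map fun j => y j ^ e j).prod
      = (c : F) • (l.map fun j => y j ^ e' j).prod := by
  induction l with
  | nil => simp at hil
  | cons j l ih =>
    obtain ⟨hjl, hl⟩ := List.nodup_cons.mp hl
    simp only [List.map_cons, List.prod_cons]
    by_cases hji : j = i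
    · subst hji
      have hrest : (l.map fun t => y t ^ e t) = l.map fun t => y t ^ e' t :=
        List.map_congr_left fun t ht => by rw [he t (ne_of_mem_of_not_mem ht hjl)]
      exact ⟨1, by rw [← mul_assoc, hi, hrest, Units.val_one, one_smul]⟩
    · obtain ⟨c, hc⟩ := ih hl ((List.mem_cons.mp hil).resolve_left (Ne.symm hji))
      obtain ⟨d, hd⟩ := hcomm i j
      refine ⟨d ^ e j * c, ?_⟩
      rw [← mul_assoc, mul_pow_eq_units_smul hd, smul_mul_assoc, mul_assoc, hc, mul_smul_comm,
        smul_smul, he j hji, Units.val_mul]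

end QuasiCommuting

theorem pow_zmod_val_add_one {M : Type*} [Monoid M] {n : ℕ} [NeZero n] {x : M} (hx : x ^ n = 1)
    (a : ZMod n) : x ^ (a + 1).val = x * x ^ a.val := by
  rw [ZMod.val_add, ZMod.val_one_eq_one_mod, Nat.add_mod_mod, ← pow_eq_pow_mod _ hx, pow_succ']

def orderedMonomial {M : Type*} [Monoid M] {k : ℕ} {n : Fin k → ℕ} (y : Fin k → M)
    (g : ∀ i, ZMod (n i)) : M :=
  ((List.finRange k).map fun j => y j ^ (g j).val).prod

section OrderedMonomial

variable {k : ℕ} {n : Fin k → ℕ}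

theorem orderedMonomial_zero {M : Type*} [Monoid M] (y : Fin k → M) :
    orderedMonomial y (0 : ∀ i, ZMod (n i)) = 1 := by
  simp [orderedMonomial]

theorem map_orderedMonomial {M N H : Type*} [Monoid M] [Monoid N] [FunLike H M N]
    [MonoidHomClass H M N] (f : H) (y : Fin k → M) (g : ∀ i, ZMod (n i)) :
    f (orderedMonomial y g) = orderedMonomial (fun j => f (y j)) g := by
  simp [orderedMonomial, map_list_prod, List.map_map, Function.comp_def]

variable {F R : Type*} [CommSemiring F] [Semiring R] [Algebra F R] [∀ i, NeZero (n i)]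
  {y : Fin k → R}

theorem exists_mul_orderedMonomial
    (hcomm : ∀ i j, ∃ c : Fˣ, y i * y j = (c : F) • (y j * y i)) (hpow : ∀ i, y i ^ n i = 1)
    (i : Fin k) (g : ∀ i, ZMod (n i)) :
    ∃ c : Fˣ, y i * orderedMonomial y g = (c : F) • orderedMonomial y (g + Pi.single i 1) :=
  exists_mul_list_prod_pow_eq hcomm (fun j hj => by simp [Pi.single_eq_of_ne hj])
    (by simp [pow_zmod_val_add_one (hpow i)]) (List.nodup_finRange k) (List.mem_finRange i)

theorem span_range_orderedMonomial_eq_top (hgen : Algebra.adjoin F (Set.range y) = ⊤)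
    (hcomm : ∀ i j, ∃ c : Fˣ, y i * y j = (c : F) • (y j * y i)) (hpow : ∀ i, y i ^ n i = 1) :
    Submodule.span F (Set.range (orderedMonomial (n := n) y)) = ⊤ := by
  refine Algebra.span_range_eq_top_of_mul_mem hgen ?_ ?_
  · rw [← orderedMonomial_zero y]
    exact Submodule.subset_span ⟨0, rfl⟩
  · rintro _ ⟨i, rfl⟩ g
    obtain ⟨c, hc⟩ := exists_mul_orderedMonomial hcomm hpow i g
    rw [hc]
    exact Submodule.smul_mem _ _ (Submodule.subset_span ⟨_, rfl⟩)

end OrderedMonomial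

section Bicharacter

variable {G F : Type*} [AddCommGroup G] [Field F]

theorem IsBichar.map_zero_left_s3 {ξ : G → G → Fˣ} (hξ : IsBichar ξ) (b : G) : ξ 0 b = 1 := by
  simpa using hξ.1 0 0 b

theorem IsBichar.map_nsmul_left {ξ : G → G → Fˣ} (hξ : IsBichar ξ) (m : ℕ) (a b : G) :
    ξ (m • a) b = ξ a b ^ m := by
  induction m with
  | zero => simpa using hξ.map_zero_left_s3 b
  | succ m ih => rw [succ_nsmul, hξ.1, ih, pow_succ]

theorem IsAltBichar.mul_swap {β : G → G → Fˣ} (hβ : IsAltBichar β) (a b : G) :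
    β a b * β b a = 1 := by
  have h := hβ.2 (a + b)
  rwa [hβ.1.1, hβ.1.2, hβ.1.2, hβ.2 a, hβ.2 b, one_mul, mul_one] at h

theorem twist_eq_mul_twist_swap {ι : Type*} [LinearOrder ι] {a : ι → G} {β ξ : G → G → Fˣ}
    (hβ : IsAltBichar β) (hξ : ∀ i j, ξ (a i) (a j) = if i ≤ j then 1 else β (a i) (a j))
    (i j : ι) : ξ (a i) (a j) = β (a i) (a j) * ξ (a j) (a i) := by
  rcases lt_trichotomy i j with hij | rfl | hij
  · rw [hξ i j, if_pos hij.le, hξ j i, if_neg (not_le_of_gt hij), hβ.mul_swap]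
  · rw [hβ.2, one_mul]
  · rw [hξ i j, if_neg (not_le_of_gt hij), hξ j i, if_pos hij.le, mul_one]

end Bicharacter

/-- `u` multiplies like the basis of the twisted group algebra `F^ξ G`. -/
structure IsTwistedHom {G F A : Type*} [AddCommGroup G] [Field F] [Semiring A] [Algebra F A]
    (ξ : G → G → Fˣ) (u : G → A) : Prop where
  map_zero : u 0 = 1
  mul_eq : ∀ a b, u a * u b = (ξ a b : F) • u (a + b)

namespace IsTwistedHom

variable {G F A : Type*} [AddCommGroup G] [Field F] [Semiring A] [Algebra F A]
  {ξ : G → G → Fˣ} {u : G → A}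

theorem mul_comm_eq_smul (hu : IsTwistedHom ξ u) {a b : G} {c : Fˣ} (h : ξ a b = c * ξ b a) :
    u a * u b = (c : F) • (u b * u a) := by
  rw [hu.mul_eq, hu.mul_eq, smul_smul, add_comm, h, Units.val_mul]

theorem pow_eq (hu : IsTwistedHom ξ u) (hξ : IsBichar ξ) {g : G} (hg : ξ g g = 1) (m : ℕ) :
    u g ^ m = u (m • g) := by
  induction m with
  | zero => simp [hu.map_zero]
  | succ m ih =>
    rw [pow_succ, ih, hu.mul_eq, hξ.map_nsmul_left, hg, one_pow, Units.val_one, one_smul,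
      succ_nsmul]

theorem exists_list_prod_eq (hu : IsTwistedHom ξ u) (l : List G) :
    ∃ c : Fˣ, (l.map u).prod = (c : F) • u l.sum := by
  induction l with
  | nil => exact ⟨1, by simp [hu.map_zero]⟩
  | cons a l ih =>
    obtain ⟨c, hc⟩ := ih
    refine ⟨ξ a l.sum * c, ?_⟩
    rw [List.map_cons, List.prod_cons, hc, mul_smul_comm, hu.mul_eq, smul_smul, List.sum_cons,
      Units.val_mul, mul_comm (c : F)]

variable {k : ℕ} {n : Fin k → ℕ} {ξ : (∀ i, ZMod (n i)) → (∀ i, ZMod (n i)) → Fˣ}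
  {u : (∀ i, ZMod (n i)) → A}

theorem pow_single_eq_one (hu : IsTwistedHom ξ u) (hξ : IsBichar ξ)
    (hdiag : ∀ i, ξ (Pi.single i 1) (Pi.single i 1) = 1) (i : Fin k) :
    u (Pi.single i 1) ^ n i = 1 := by
  rw [hu.pow_eq hξ (hdiag i), ← Pi.single_smul, nsmul_eq_mul, mul_one, ZMod.natCast_self,
    Pi.single_zero, hu.map_zero]

theorem exists_orderedMonomial_single_eq [∀ i, NeZero (n i)] (hu : IsTwistedHom ξ u) (hξ : IsBichar ξ)
    (hdiag : ∀ i, ξ (Pi.single i 1) (Pi.single i 1) = 1) (g : ∀ i, ZMod (n i)) :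
    ∃ c : Fˣ, orderedMonomial (fun j => u (Pi.single j 1)) g = (c : F) • u g := by
  have hsum : ((List.finRange k).map fun j => (g j).val • (Pi.single j 1 : ∀ i, ZMod (n i))).sum
      = g := by
    simp [← Fin.sum_univ_def, ← Pi.single_smul, Finset.univ_sum_single]
  obtain ⟨c, hc⟩ := hu.exists_list_prod_eq
    ((List.finRange k).map fun j => (g j).val • (Pi.single j 1 : ∀ i, ZMod (n i)))
  rw [hsum] at hc
  refine ⟨c, ?_⟩
  rw [← hc, List.map_map]
  simp only [orderedMonomial, Function.comp_def, hu.pow_eq hξ (hdiag _)]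

end IsTwistedHom

section Presentation

variable {F ι R : Type*} [CommSemiring F] [Semiring R] [Algebra F R]

theorem RingQuot.adjoin_range_mkAlgHom_ι (rel : FreeAlgebra F ι → FreeAlgebra F ι → Prop) :
    Algebra.adjoin F (Set.range fun i => RingQuot.mkAlgHom F rel (FreeAlgebra.ι F i)) = ⊤ := by
  rw [Set.range_comp' (RingQuot.mkAlgHom F rel), ← AlgHom.map_adjoin, FreeAlgebra.adjoin_range_ι,
    Algebra.map_top, AlgHom.range_eq_top]
  exact RingQuot.mkAlgHom_surjective F rel

theorem respects_quasiCommRel_iff {n : ι → ℕ} {q : ι → ι → F}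
    {rel : FreeAlgebra F ι → FreeAlgebra F ι → Prop}
    (hrel : ∀ x y, rel x y ↔
      (∃ i j, x = FreeAlgebra.ι F i * FreeAlgebra.ι F j ∧
          y = q i j • (FreeAlgebra.ι F j * FreeAlgebra.ι F i)) ∨
      (∃ i, x = FreeAlgebra.ι F i ^ n i ∧ y = 1))
    (f : FreeAlgebra F ι →ₐ[F] R) :
    (∀ ⦃x y⦄, rel x y → f x = f y) ↔
      (∀ i j, f (FreeAlgebra.ι F i) * f (FreeAlgebra.ι F j)
          = q i j • (f (FreeAlgebra.ι F j) * f (FreeAlgebra.ι F i))) ∧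
        ∀ i, f (FreeAlgebra.ι F i) ^ n i = 1 := by
  constructor
  · intro hf
    refine ⟨fun i j => ?_, fun i => ?_⟩
    · simpa using hf ((hrel _ _).mpr (Or.inl ⟨i, j, rfl, rfl⟩))
    · simpa using hf ((hrel _ _).mpr (Or.inr ⟨i, rfl, rfl⟩))
  · rintro ⟨hcomm, hpow⟩ x y hxy
    rcases (hrel x y).mp hxy with ⟨i, j, rfl, rfl⟩ | ⟨i, rfl, rfl⟩
    · simpa using hcomm i j
    · simpa using hpow i

end Presentation

theorem twisted_group_algebra_presentation_general
    {F : Type*} [Field F]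
    (k : ℕ) (n : Fin k → ℕ) (hn : ∀ i, 0 < n i)
    (β : (∀ i : Fin k, ZMod (n i)) → (∀ i : Fin k, ZMod (n i)) → Fˣ)
    (hβ : IsAltBichar β)
    (ξ : (∀ i : Fin k, ZMod (n i)) → (∀ i : Fin k, ZMod (n i)) → Fˣ)
    (hξbil : IsBichar ξ)
    (hξval : ∀ i j : Fin k, ξ (Pi.single i 1) (Pi.single j 1) =
        if i ≤ j then 1 else β (Pi.single i 1) (Pi.single j 1))
    {A : Type*} [Ring A] [Algebra F A]
    (u : (∀ i : Fin k, ZMod (n i)) → A)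
    (hind : LinearIndependent F u)
    (hspan : Submodule.span F (Set.range u) = ⊤)
    (hone : u 0 = 1)
    (hmul : ∀ a b, u a * u b = (ξ a b : F) • u (a + b))
    (rel : FreeAlgebra F (Fin k) → FreeAlgebra F (Fin k) → Prop)
    (hrel : ∀ x y, rel x y ↔
      (∃ i j : Fin k, x = FreeAlgebra.ι F i * FreeAlgebra.ι F j ∧
          y = (β (Pi.single i 1) (Pi.single j 1) : F) •
              (FreeAlgebra.ι F j * FreeAlgebra.ι F i)) ∨
      (∃ i : Fin k, x = FreeAlgebra.ι F i ^ (n i) ∧ y = 1)) :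
    ∃ φ : RingQuot rel ≃ₐ[F] A,
      ∀ i : Fin k, φ (RingQuot.mkAlgHom F rel (FreeAlgebra.ι F i)) = u (Pi.single i 1) := by
  have : ∀ i, NeZero (n i) := fun i => ⟨(hn i).ne'⟩
  have hu : IsTwistedHom ξ u := ⟨hone, hmul⟩
  have hdiag : ∀ i : Fin k, ξ (Pi.single i 1) (Pi.single i 1) = 1 := fun i => by
    simpa using hξval i i
  have hlift := (respects_quasiCommRel_iff hrel (FreeAlgebra.lift F fun i => u (Pi.single i 1))).mpr
    ⟨fun i j => by simpa using hu.mul_comm_eq_smul (twist_eq_mul_twist_swap hβ hξval i j),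
      fun i => by simpa using hu.pow_single_eq_one hξbil hdiag i⟩
  let φ := RingQuot.liftAlgHom F ⟨_, hlift⟩
  have hφ : ∀ i, φ (RingQuot.mkAlgHom F rel (FreeAlgebra.ι F i)) = u (Pi.single i 1) := by
    simp [φ]
  obtain ⟨hcomm, hpow⟩ := (respects_quasiCommRel_iff hrel (RingQuot.mkAlgHom F rel)).mp
    fun _ _ h => RingQuot.mkAlgHom_rel F h
  have hmono := span_range_orderedMonomial_eq_top (RingQuot.adjoin_range_mkAlgHom_ι rel)
    (fun i j => ⟨_, hcomm i j⟩) hpow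
  choose c hc using hu.exists_orderedMonomial_single_eq hξbil hdiag
  have hφmono : ∀ g, φ (orderedMonomial (fun i => RingQuot.mkAlgHom F rel (FreeAlgebra.ι F i)) g)
      = ((Module.Basis.mk hind hspan.ge).unitsSMul c) g := fun g => by
    rw [map_orderedMonomial, Module.Basis.unitsSMul_apply, Module.Basis.mk_apply]
    simp only [hφ, hc, Units.smul_def]
  exact ⟨AlgEquiv.ofBijective φ (φ.toLinearMap.bijective_of_map_eq_basis hmono _ hφmono), hφ⟩

/-- Let `G = ⊕_{i=1}^k ℤ aᵢ` be a finite abelian group (realized as `∀ i, ZMod (n i)` with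
generators `aᵢ = Pi.single i 1` of orders `n i`), `β` an alternating bicharacter on `G`, and
`ξ` the bicharacter with `ξ(aᵢ,aⱼ) = 1` for `i ≤ j` and `β(aᵢ,aⱼ)` for `i > j`.  The twisted
group algebra `F^ξ G` (an algebra `A` with basis `u : G → A`, `u 0 = 1` and
`u a * u b = ξ a b • u (a+b)`) is isomorphic to the `F`-algebra generated by `x₁,…,x_k`
subject to the relations `xᵢxⱼ = β(aᵢ,aⱼ) xⱼxᵢ` and `xᵢ^{nᵢ} = 1`, via
`xᵢ ↦ u_{aᵢ}`. -/
theorem twisted_group_algebra_presentation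
    {F : Type*} [Field F] [IsAlgClosed F] [CharZero F]
    (k : ℕ) (n : Fin k → ℕ) (hn : ∀ i, 0 < n i)
    (β : (∀ i : Fin k, ZMod (n i)) → (∀ i : Fin k, ZMod (n i)) → Fˣ)
    (hβ : IsAltBichar β)
    (ξ : (∀ i : Fin k, ZMod (n i)) → (∀ i : Fin k, ZMod (n i)) → Fˣ)
    (hξbil : IsBichar ξ)
    (hξval : ∀ i j : Fin k, ξ (Pi.single i 1) (Pi.single j 1) =
        if i ≤ j then 1 else β (Pi.single i 1) (Pi.single j 1))
    {A : Type*} [Ring A] [Algebra F A]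
    (u : (∀ i : Fin k, ZMod (n i)) → A)
    (hind : LinearIndependent F u)
    (hspan : Submodule.span F (Set.range u) = ⊤)
    (hone : u 0 = 1)
    (hmul : ∀ a b, u a * u b = (ξ a b : F) • u (a + b))
    (rel : FreeAlgebra F (Fin k) → FreeAlgebra F (Fin k) → Prop)
    (hrel : ∀ x y, rel x y ↔
      (∃ i j : Fin k, x = FreeAlgebra.ι F i * FreeAlgebra.ι F j ∧
          y = (β (Pi.single i 1) (Pi.single j 1) : F) •
              (FreeAlgebra.ι F j * FreeAlgebra.ι F i)) ∨
      (∃ i : Fin k, x = FreeAlgebra.ι F i ^ (n i) ∧ y = 1)) :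
    ∃ φ : RingQuot rel ≃ₐ[F] A,
      ∀ i : Fin k, φ (RingQuot.mkAlgHom F rel (FreeAlgebra.ι F i)) = u (Pi.single i 1) :=
  twisted_group_algebra_presentation_general k n hn β hβ ξ hξbil hξval u hind hspan hone hmul rel
    hrel
end

section
/- Let (G,β,R) be a skew root system of Lie type and ξ a 2-cocycle on G with Ψ(ξ) = β. Then L(R) = ⊕_{a∈R} F u_a is a G-graded Lie subalgebra of (F^ξ G)^− (the twisted group algebra with bracket [x,y] = xy − yx), with [u_a, u_b] = (ξ(a,b) − ξ(b,a)) u_{a+b}. -/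
/-- `R` is a skew root system of Lie type in `(G, β)`:  `R ⊆ G ∖ Rad(β)` generates `G`,
is symmetric, and is closed under addition of pairs `a b` with `β a b ≠ 1`. -/
def IsSkewRootLie {G : Type*} [AddCommGroup G] {F : Type*} [Field F]
    (β : G → G → Fˣ) (R : Set G) : Prop :=
  (∀ a ∈ R, ∃ h : G, β a h ≠ 1) ∧ AddSubgroup.closure R = ⊤ ∧
  (∀ a ∈ R, -a ∈ R) ∧ ∀ a ∈ R, ∀ b ∈ R, β a b ≠ 1 → a + b ∈ R

/-! The commutator `[x, y] = x y - y x` is bilinear, so the span of a set closed under it up to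
linear combinations is closed under it. In the twisted group algebra `[u_a, u_b]` is a multiple
of `u_{a+b}`, and the multiple `ξ(a,b) - ξ(b,a)` vanishes exactly when `Ψ(ξ)(a,b) = β(a,b) = 1`;
otherwise the root system axiom puts `a + b` back in `R`. -/

theorem Submodule.mul_sub_mul_mem_span {K A : Type*} [CommSemiring K] [Ring A] [Algebra K A]
    {s : Set A} (hs : ∀ x ∈ s, ∀ y ∈ s, x * y - y * x ∈ Submodule.span K s)
    {x y : A} (hx : x ∈ Submodule.span K s) (hy : y ∈ Submodule.span K s) :
    x * y - y * x ∈ Submodule.span K s := by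
  let bracket : A →ₗ[K] A →ₗ[K] A := LinearMap.mul K A - (LinearMap.mul K A).flip
  have hspan : Submodule.map₂ bracket (Submodule.span K s) (Submodule.span K s) ≤
      Submodule.span K s := by
    rw [Submodule.map₂_span_span, Submodule.span_le]
    rintro _ ⟨x, hx, y, hy, rfl⟩
    exact hs x hx y hy
  exact hspan (Submodule.apply_mem_map₂ bracket hx hy)

section TwistedGroupAlgebra

variable {G K A : Type*} [AddCommMagma G] [Ring K] [Ring A] [Module K A]
  {ξ : G → G → K} {u : G → A}

theorem twisted_commutator (hmul : ∀ a b, u a * u b = ξ a b • u (a + b)) (a b : G) :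
    u a * u b - u b * u a = (ξ a b - ξ b a) • u (a + b) := by
  rw [hmul, hmul, add_comm b a, sub_smul]

theorem twisted_commutator_mem_span (hmul : ∀ a b, u a * u b = ξ a b • u (a + b))
    {S : Set G} {a b : G} (hab : ξ a b ≠ ξ b a → a + b ∈ S) :
    u a * u b - u b * u a ∈ Submodule.span K (u '' S) := by
  rw [twisted_commutator hmul]
  by_cases h : ξ a b = ξ b a
  · simp [h]
  · exact Submodule.smul_mem _ _ (Submodule.subset_span ⟨_, hab h, rfl⟩)

end TwistedGroupAlgebra

theorem skewRootLie_gives_graded_lie_subalgebra_general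
    {G : Type*} [AddCommGroup G] {F : Type*} [Field F]
    {A : Type*} [Ring A] [Algebra F A]
    (β ξ : G → G → Fˣ) (hΨ : ∀ a b : G, ξ a b * (ξ b a)⁻¹ = β a b)
    (R : Set G) (hR : IsSkewRootLie β R)
    (u : G → A)
    (hmul : ∀ a b : G, u a * u b = (ξ a b : F) • u (a + b)) :
    (∀ x ∈ Submodule.span F (u '' R), ∀ y ∈ Submodule.span F (u '' R),
        x * y - y * x ∈ Submodule.span F (u '' R)) ∧
    (∀ a ∈ R, ∀ b ∈ R,
        u a * u b - u b * u a = ((ξ a b : F) - (ξ b a : F)) • u (a + b)) := by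
  have hclosed (a : G) (ha : a ∈ R) (b : G) (hb : b ∈ R) (hne : (ξ a b : F) ≠ ξ b a) :
      a + b ∈ R :=
    hR.2.2.2 a ha b hb (by rwa [← hΨ, Ne, mul_inv_eq_one, ← Units.val_inj])
  refine ⟨fun x hx y hy => Submodule.mul_sub_mul_mem_span ?_ hx hy,
    fun a _ b _ => twisted_commutator hmul a b⟩
  rintro _ ⟨a, ha, rfl⟩ _ ⟨b, hb, rfl⟩
  exact twisted_commutator_mem_span hmul (hclosed a ha b hb)

/-- Let `(G,β,R)` be a skew root system of Lie type and `ξ` a 2-cocycle with `Ψ(ξ) = β`.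
In the twisted group algebra `F^ξ G` (modelled as an algebra `A` with linearly independent
family `u : G → A` satisfying `u a * u b = ξ a b • u (a+b)`), the span
`L(R) = ⊕_{a ∈ R} F u_a` is closed under the commutator bracket, i.e. is a `G`-graded Lie
subalgebra of `(F^ξ G)⁻`, with `[u_a, u_b] = (ξ(a,b) − ξ(b,a)) u_{a+b}`. -/
theorem skewRootLie_gives_graded_lie_subalgebra
    {G : Type*} [AddCommGroup G] {F : Type*} [Field F] [IsAlgClosed F] [CharZero F]
    {A : Type*} [Ring A] [Algebra F A]
    (β ξ : G → G → Fˣ) (hβ : IsAltBichar β) (hβnt : ∃ g h : G, β g h ≠ 1)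
    (hξ : IsCocycle ξ) (hΨ : ∀ a b : G, ξ a b * (ξ b a)⁻¹ = β a b)
    (R : Set G) (hR : IsSkewRootLie β R)
    (u : G → A) (hind : LinearIndependent F u)
    (hmul : ∀ a b : G, u a * u b = (ξ a b : F) • u (a + b)) :
    (∀ x ∈ Submodule.span F (u '' R), ∀ y ∈ Submodule.span F (u '' R),
        x * y - y * x ∈ Submodule.span F (u '' R)) ∧
    (∀ a ∈ R, ∀ b ∈ R,
        u a * u b - u b * u a = ((ξ a b : F) - (ξ b a : F)) • u (a + b)) :=
  skewRootLie_gives_graded_lie_subalgebra_general β ξ hΨ R hR u hmul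
end

section
/- Let (G,β,R) be a skew root system of Jordan type and ξ a 2-cocycle on G with Ψ(ξ) = β. Then J(R) = ⊕_{a∈R} F u_a is a G-graded Jordan subalgebra of (F^ξ G)^+ (the twisted group algebra with product x∘y = (xy+yx)/2), with u_a ∘ u_b = ((ξ(a,b)+ξ(b,a))/2) u_{a+b}. -/
/-- `R` is a skew root system of Jordan type in `(G, β)`. -/
def IsSkewRootJordan {G : Type*} [AddCommGroup G] {F : Type*} [Field F]
    (β : G → G → Fˣ) (R : Set G) : Prop :=
  AddSubgroup.closure R = ⊤ ∧ (∀ a ∈ R, -a ∈ R) ∧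
  ∀ a ∈ R, ∀ b ∈ R, β a b ≠ -1 → a + b ∈ R

theorem Submodule.mul_add_mul_mem_span {R A : Type*} [CommSemiring R] [Semiring A]
    [Algebra R A] {s : Set A} (hs : ∀ a ∈ s, ∀ b ∈ s, a * b + b * a ∈ span R s)
    {x y : A} (hx : x ∈ span R s) (hy : y ∈ span R s) : x * y + y * x ∈ span R s := by
  let anticomm : A →ₗ[R] A →ₗ[R] A := LinearMap.mul R A + (LinearMap.mul R A).flip
  have hspan : map₂ anticomm (span R s) (span R s) ≤ span R s := by
    rw [map₂_span_span, span_le]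
    rintro _ ⟨a, ha, b, hb, rfl⟩
    exact hs a ha b hb
  exact hspan (apply_mem_map₂ anticomm hx hy)

theorem Units.coe_add_eq_zero_of_mul_inv_eq_neg_one {R : Type*} [Ring R] {x y : Rˣ}
    (h : x * y⁻¹ = -1) : (x : R) + y = 0 := by
  rw [_root_.mul_inv_eq_iff_eq_mul, neg_one_mul] at h
  rw [h, Units.val_neg, neg_add_cancel]

theorem mul_add_mul_eq_of_twisted {G R A : Type*} [AddCommMonoid G] [CommSemiring R]
    [Semiring A] [Module R A] {ξ : G → G → R} {u : G → A}
    (hmul : ∀ a b, u a * u b = ξ a b • u (a + b)) (a b : G) :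
    u a * u b + u b * u a = (ξ a b + ξ b a) • u (a + b) := by
  rw [hmul, hmul, add_comm b a, add_smul]

theorem skewRootJordan_gives_graded_jordan_subalgebra_general
    {G : Type*} [AddCommGroup G] {F : Type*} [Field F]
    {A : Type*} [Ring A] [Algebra F A]
    (β ξ : G → G → Fˣ)
    (hΨ : ∀ a b : G, ξ a b * (ξ b a)⁻¹ = β a b)
    (R : Set G) (hR : IsSkewRootJordan β R)
    (u : G → A)
    (hmul : ∀ a b : G, u a * u b = (ξ a b : F) • u (a + b)) :
    (∀ x ∈ Submodule.span F (u '' R), ∀ y ∈ Submodule.span F (u '' R),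
        (1/2 : F) • (x * y + y * x) ∈ Submodule.span F (u '' R)) ∧
    (∀ a ∈ R, ∀ b ∈ R,
        (1/2 : F) • (u a * u b + u b * u a) =
          (((ξ a b : F) + (ξ b a : F)) / 2) • u (a + b)) := by
  have hanticomm := mul_add_mul_eq_of_twisted (ξ := fun a b => (ξ a b : F)) hmul
  have hgen : ∀ x ∈ u '' R, ∀ y ∈ u '' R, x * y + y * x ∈ Submodule.span F (u '' R) := by
    rintro _ ⟨a, ha, rfl⟩ _ ⟨b, hb, rfl⟩
    rw [hanticomm]
    by_cases hβab : β a b = -1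
    · rw [Units.coe_add_eq_zero_of_mul_inv_eq_neg_one ((hΨ a b).trans hβab), zero_smul]
      exact zero_mem _
    · exact Submodule.smul_mem _ _ <|
        Submodule.subset_span ⟨a + b, hR.2.2 a ha b hb hβab, rfl⟩
  refine ⟨fun x hx y hy => Submodule.smul_mem _ _ (Submodule.mul_add_mul_mem_span hgen hx hy),
    fun a _ b _ => ?_⟩
  rw [hanticomm, smul_smul, one_div_mul_eq_div]

/-- Let `(G,β,R)` be a skew root system of Jordan type and `ξ` a 2-cocycle with `Ψ(ξ) = β`.
In the twisted group algebra `F^ξ G` (modelled as an algebra `A` with linearly independent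
family `u : G → A` satisfying `u a * u b = ξ a b • u (a+b)`), the span
`J(R) = ⊕_{a ∈ R} F u_a` is closed under the Jordan product `x ∘ y = (xy + yx)/2`, i.e. is
a `G`-graded Jordan subalgebra of `(F^ξ G)⁺`, with
`u_a ∘ u_b = ((ξ(a,b) + ξ(b,a))/2) u_{a+b}`. -/
theorem skewRootJordan_gives_graded_jordan_subalgebra
    {G : Type*} [AddCommGroup G] {F : Type*} [Field F] [IsAlgClosed F] [CharZero F]
    {A : Type*} [Ring A] [Algebra F A]
    (β ξ : G → G → Fˣ) (hβ : IsAltBichar β)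
    (hξ : IsCocycle ξ) (hΨ : ∀ a b : G, ξ a b * (ξ b a)⁻¹ = β a b)
    (R : Set G) (hR : IsSkewRootJordan β R)
    (u : G → A) (hind : LinearIndependent F u)
    (hmul : ∀ a b : G, u a * u b = (ξ a b : F) • u (a + b)) :
    (∀ x ∈ Submodule.span F (u '' R), ∀ y ∈ Submodule.span F (u '' R),
        (1/2 : F) • (x * y + y * x) ∈ Submodule.span F (u '' R)) ∧
    (∀ a ∈ R, ∀ b ∈ R,
        (1/2 : F) • (u a * u b + u b * u a) =
          (((ξ a b : F) + (ξ b a : F)) / 2) • u (a + b)) :=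
  skewRootJordan_gives_graded_jordan_subalgebra_general β ξ hΨ R hR u hmul
end

section
/- Let (G,β,R) be a skew root system (of Lie or Jordan type) and H a subgroup of Rad(β). Let Ḡ = G/H, R̄ the image of R in Ḡ, and β̄ the induced alternating bicharacter on Ḡ. Then (Ḡ, β̄, R̄) is a skew root system of the same type, and it is reduced (β̄ nonsingular) when H = Rad(β). -/
open Function

section Descent

variable {G G' F : Type*} [AddCommGroup G] [AddCommGroup G'] [Field F]
  {β : G → G → Fˣ} {β' : G' → G' → Fˣ} {f : G →+ G'}

theorem IsBichar.of_comp_surjective (hf : Surjective f)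
    (hβ' : ∀ g h, β' (f g) (f h) = β g h) (hβ : IsBichar β) : IsBichar β' := by
  constructor
  · intro a b c
    obtain ⟨a, rfl⟩ := hf a; obtain ⟨b, rfl⟩ := hf b; obtain ⟨c, rfl⟩ := hf c
    rw [← map_add, hβ', hβ', hβ', hβ.1]
  · intro a b c
    obtain ⟨a, rfl⟩ := hf a; obtain ⟨b, rfl⟩ := hf b; obtain ⟨c, rfl⟩ := hf c
    rw [← map_add, hβ', hβ', hβ', hβ.2]

theorem IsAltBichar.of_comp_surjective (hf : Surjective f)
    (hβ' : ∀ g h, β' (f g) (f h) = β g h) (hβ : IsAltBichar β) : IsAltBichar β' := by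
  refine ⟨hβ.1.of_comp_surjective hf hβ', fun g ↦ ?_⟩
  obtain ⟨g, rfl⟩ := hf g
  rw [hβ', hβ.2]

theorem AddSubgroup.closure_image_eq_top_of_surjective (hf : Surjective f) {R : Set G}
    (hR : AddSubgroup.closure R = ⊤) : AddSubgroup.closure (f '' R) = ⊤ := by
  rw [← AddMonoidHom.map_closure, hR, AddSubgroup.map_top_of_surjective f hf]

theorem Set.neg_mem_image_of_neg_mem {R : Set G} (hR : ∀ a ∈ R, -a ∈ R) :
    ∀ x ∈ f '' R, -x ∈ f '' R := by
  rintro _ ⟨a, ha, rfl⟩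
  exact ⟨-a, hR a ha, map_neg f a⟩

theorem Set.add_mem_image_of_add_mem (hβ' : ∀ g h, β' (f g) (f h) = β g h) (u : Fˣ)
    {R : Set G} (hR : ∀ a ∈ R, ∀ b ∈ R, β a b ≠ u → a + b ∈ R) :
    ∀ x ∈ f '' R, ∀ y ∈ f '' R, β' x y ≠ u → x + y ∈ f '' R := by
  rintro _ ⟨a, ha, rfl⟩ _ ⟨b, hb, rfl⟩ hab
  rw [hβ'] at hab
  exact ⟨a + b, hR a ha b hb hab, map_add f a b⟩

theorem IsSkewRootLie.image (hf : Surjective f) (hβ' : ∀ g h, β' (f g) (f h) = β g h)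
    {R : Set G} (hR : IsSkewRootLie β R) : IsSkewRootLie β' (f '' R) := by
  obtain ⟨hsing, hgen, hneg, hadd⟩ := hR
  refine ⟨?_, AddSubgroup.closure_image_eq_top_of_surjective hf hgen,
    Set.neg_mem_image_of_neg_mem hneg, Set.add_mem_image_of_add_mem hβ' 1 hadd⟩
  rintro _ ⟨a, ha, rfl⟩
  obtain ⟨h, hh⟩ := hsing a ha
  exact ⟨f h, by rwa [hβ']⟩

theorem IsSkewRootJordan.image (hf : Surjective f) (hβ' : ∀ g h, β' (f g) (f h) = β g h)
    {R : Set G} (hR : IsSkewRootJordan β R) : IsSkewRootJordan β' (f '' R) :=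
  ⟨AddSubgroup.closure_image_eq_top_of_surjective hf hR.1,
    Set.neg_mem_image_of_neg_mem hR.2.1, Set.add_mem_image_of_add_mem hβ' (-1) hR.2.2⟩

theorem eq_zero_of_forall_eq_one_of_comp_surjective (hf : Surjective f)
    (hβ' : ∀ g h, β' (f g) (f h) = β g h) (hrad : ∀ g, (∀ h, β g h = 1) → f g = 0)
    (x : G') (hx : ∀ y, β' x y = 1) : x = 0 := by
  obtain ⟨g, rfl⟩ := hf x
  exact hrad g fun h ↦ hβ' g h ▸ hx (f h)

end Descent

theorem skewRoot_quotient_general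
    {G : Type*} [AddCommGroup G] {F : Type*} [Field F]
    (β : G → G → Fˣ) (hβ : IsAltBichar β)
    (H : AddSubgroup G)
    (β' : G ⧸ H → G ⧸ H → Fˣ)
    (hβ' : ∀ g h : G, β' (g : G ⧸ H) (h : G ⧸ H) = β g h)
    (R : Set G) :
    IsAltBichar β' ∧
    (IsSkewRootLie β R →
      IsSkewRootLie β' ((QuotientAddGroup.mk : G → G ⧸ H) '' R)) ∧
    (IsSkewRootJordan β R →
      IsSkewRootJordan β' ((QuotientAddGroup.mk : G → G ⧸ H) '' R)) ∧
    ((∀ g : G, (∀ h : G, β g h = 1) → g ∈ H) →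
      ∀ x : G ⧸ H, (∀ y : G ⧸ H, β' x y = 1) → x = 0) := by
  have hmk : Surjective (QuotientAddGroup.mk' H) := QuotientAddGroup.mk'_surjective H
  refine ⟨hβ.of_comp_surjective hmk hβ', IsSkewRootLie.image hmk hβ',
    IsSkewRootJordan.image hmk hβ', fun hrad ↦ ?_⟩
  exact eq_zero_of_forall_eq_one_of_comp_surjective hmk hβ' fun g hg ↦
    (QuotientAddGroup.eq_zero_iff g).mpr (hrad g hg)

/-- Let `(G,β,R)` be a skew root system (of Lie or Jordan type), `H ≤ Rad(β)` a subgroup,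
`Ḡ = G/H`, `R̄` the image of `R` and `β̄` the induced alternating bicharacter
(`β̄(ḡ,h̄) = β(g,h)`).  Then `(Ḡ,β̄,R̄)` is a skew root system of the same type, and it is
reduced (i.e. `β̄` is nonsingular) when `H = Rad(β)`. -/
theorem skewRoot_quotient
    {G : Type*} [AddCommGroup G] {F : Type*} [Field F] [IsAlgClosed F] [CharZero F]
    (β : G → G → Fˣ) (hβ : IsAltBichar β)
    (H : AddSubgroup G) (hH : ∀ g ∈ H, ∀ h : G, β g h = 1)
    (β' : G ⧸ H → G ⧸ H → Fˣ)
    (hβ' : ∀ g h : G, β' (g : G ⧸ H) (h : G ⧸ H) = β g h)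
    (R : Set G) :
    IsAltBichar β' ∧
    (IsSkewRootLie β R →
      IsSkewRootLie β' ((QuotientAddGroup.mk : G → G ⧸ H) '' R)) ∧
    (IsSkewRootJordan β R →
      IsSkewRootJordan β' ((QuotientAddGroup.mk : G → G ⧸ H) '' R)) ∧
    ((∀ g : G, (∀ h : G, β g h = 1) → g ∈ H) →
      ∀ x : G ⧸ H, (∀ y : G ⧸ H, β' x y = 1) → x = 0) :=
  skewRoot_quotient_general β hβ H β' hβ' R
end

section
/- Let (G,β,R) be a skew root system of Jordan type. Then the G-graded Jordan algebra J(R) = ⊕_{a∈R} F u_a is graded-simple: every nonzero graded ideal of J(R) equals J(R). -/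
namespace IsBichar

variable {G F : Type*} [AddCommGroup G] [Field F] {β : G → G → Fˣ}

theorem map_zero_left_s13 (hβ : IsBichar β) (g : G) : β 0 g = 1 := by
  have h := hβ.1 0 0 g
  rwa [add_zero, left_eq_mul] at h

theorem map_neg_left (hβ : IsBichar β) (a g : G) : β (-a) g = (β a g)⁻¹ := by
  have h := hβ.1 (-a) a g
  rw [neg_add_cancel, hβ.map_zero_left_s13] at h
  exact eq_inv_of_mul_eq_one_left h.symm

end IsBichar

theorem IsAltBichar.map_neg_self {G F : Type*} [AddCommGroup G] [Field F] {β : G → G → Fˣ}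
    (hβ : IsAltBichar β) (g : G) : β (-g) g = 1 := by
  rw [hβ.1.map_neg_left, hβ.2, inv_one]

theorem apply_neg_comm_of_commutator_eq {G F : Type*} [AddCommGroup G] [Field F]
    {β ξ : G → G → Fˣ} (hβ : IsAltBichar β) (hΨ : ∀ a b : G, ξ a b * (ξ b a)⁻¹ = β a b)
    (g : G) : ξ (-g) g = ξ g (-g) := by
  rw [← mul_inv_eq_one, hΨ, hβ.map_neg_self]

section JordanProduct

variable {F A : Type*} [Field F] [CharZero F] [Ring A] [Algebra F A]

theorem half_smul_mul_one_add_one_mul (x : A) : (1 / 2 : F) • (x * 1 + 1 * x) = x := by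
  rw [mul_one, one_mul, ← two_smul F x, smul_smul]
  norm_num

theorem Submodule.le_of_one_mem_of_jordan_absorbing {J I : Submodule F A}
    (hI : ∀ x ∈ J, ∀ y ∈ I, (1 / 2 : F) • (x * y + y * x) ∈ I) (h1 : (1 : A) ∈ I) :
    J ≤ I := fun x hx => half_smul_mul_one_add_one_mul (F := F) x ▸ hI x hx 1 h1

theorem jordan_neg_self_of_twisted_mul {G : Type*} [AddCommGroup G] {ξ : G → G → Fˣ}
    {u : G → A} (hmul : ∀ a b : G, u a * u b = (ξ a b : F) • u (a + b)) {g : G}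
    (hξg : ξ (-g) g = ξ g (-g)) :
    (1 / 2 : F) • (u (-g) * u g + u g * u (-g)) = (ξ g (-g) : F) • u 0 := by
  rw [hmul, hmul, neg_add_cancel, add_neg_cancel, hξg, ← two_smul F, smul_smul, smul_smul]
  norm_num

end JordanProduct

theorem skewRootJordan_graded_simple_general
    {G : Type*} [AddCommGroup G] {F : Type*} [Field F] [CharZero F]
    {A : Type*} [Ring A] [Algebra F A]
    (β ξ : G → G → Fˣ) (hβ : IsAltBichar β)
    (hΨ : ∀ a b : G, ξ a b * (ξ b a)⁻¹ = β a b)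
    (R : Set G) (hR : IsSkewRootJordan β R)
    (u : G → A) (hone : u 0 = 1)
    (hmul : ∀ a b : G, u a * u b = (ξ a b : F) • u (a + b)) :
    ∀ S : Set G, S ⊆ R →
      (∀ x ∈ Submodule.span F (u '' R), ∀ y ∈ Submodule.span F (u '' S),
        (1/2 : F) • (x * y + y * x) ∈ Submodule.span F (u '' S)) →
      Submodule.span F (u '' S) ≠ ⊥ →
      Submodule.span F (u '' S) = Submodule.span F (u '' R) := by
  intro S hSR hideal hne
  obtain ⟨b, hbS⟩ : S.Nonempty := Set.nonempty_iff_ne_empty.2 (by rintro rfl; simp at hne)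
  -- `u (-b) ∘ u b` is a nonzero multiple of `u 0 = 1` because `β (-b) b = 1`.
  have h1 : (1 : A) ∈ Submodule.span F (u '' S) := by
    have h := hideal _ (Submodule.subset_span ⟨-b, hR.2.1 b (hSR hbS), rfl⟩) _
      (Submodule.subset_span ⟨b, hbS, rfl⟩)
    rw [jordan_neg_self_of_twisted_mul hmul (apply_neg_comm_of_commutator_eq hβ hΨ b), hone]
      at h
    exact (Submodule.smul_mem_iff _ (Units.ne_zero _)).1 h
  exact le_antisymm (Submodule.span_mono (Set.image_mono hSR))
    (Submodule.le_of_one_mem_of_jordan_absorbing hideal h1)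

/-- Let `(G,β,R)` be a skew root system of Jordan type.  The `G`-graded Jordan algebra
`J(R) = ⊕_{a ∈ R} F u_a` (inside the twisted group algebra, with product
`x ∘ y = (xy+yx)/2`) is graded-simple: every nonzero graded ideal (i.e. an ideal spanned
by a subset of the homogeneous basis elements `u_a`, `a ∈ S ⊆ R`) equals `J(R)`. -/
theorem skewRootJordan_graded_simple
    {G : Type*} [AddCommGroup G] {F : Type*} [Field F] [IsAlgClosed F] [CharZero F]
    {A : Type*} [Ring A] [Algebra F A]
    (β ξ : G → G → Fˣ) (hβ : IsAltBichar β)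
    (hξ : IsBichar ξ) (hΨ : ∀ a b : G, ξ a b * (ξ b a)⁻¹ = β a b)
    (R : Set G) (hR : IsSkewRootJordan β R)
    (u : G → A) (hind : LinearIndependent F u) (hone : u 0 = 1)
    (hmul : ∀ a b : G, u a * u b = (ξ a b : F) • u (a + b)) :
    ∀ S : Set G, S ⊆ R →
      (∀ x ∈ Submodule.span F (u '' R), ∀ y ∈ Submodule.span F (u '' S),
        (1/2 : F) • (x * y + y * x) ∈ Submodule.span F (u '' S)) →
      Submodule.span F (u '' S) ≠ ⊥ →
      Submodule.span F (u '' S) = Submodule.span F (u '' R) :=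
  skewRootJordan_graded_simple_general β ξ hβ hΨ R hR u hone hmul
end

section
/- Let G be a finite abelian group and (G,β,R) a skew root system of Lie type. Then the Lie algebra L(R) is semisimple; specifically, its Killing form κ satisfies κ(u_a,u_b)=0 when a+b≠0 and κ(u_a,u_{−a}) = ξ(a,−a) Σ_{b∈R} (2 − β(a,b) − β(a,b)^{-1}) ≠ 0 for all a ∈ R, hence κ is nondegenerate. -/
attribute [local instance 100] LieRing.ofAssociativeRing

namespace IsBichar

variable {G F : Type*} [AddCommGroup G] [Field F] {ξ : G → G → Fˣ}

lemma zero_left (hξ : IsBichar ξ) (c : G) : ξ 0 c = 1 := by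
  simpa using hξ.1 0 0 c

lemma zero_right (hξ : IsBichar ξ) (a : G) : ξ a 0 = 1 := by
  simpa using hξ.2 a 0 0

lemma neg_left (hξ : IsBichar ξ) (a c : G) : ξ (-a) c = (ξ a c)⁻¹ :=
  eq_inv_of_mul_eq_one_left <| by rw [← hξ.1, neg_add_cancel, hξ.zero_left]

lemma neg_right (hξ : IsBichar ξ) (a c : G) : ξ a (-c) = (ξ a c)⁻¹ :=
  eq_inv_of_mul_eq_one_left <| by rw [← hξ.2, neg_add_cancel, hξ.zero_right]

lemma nsmul_right (hξ : IsBichar ξ) (a c : G) (n : ℕ) : ξ a (n • c) = ξ a c ^ n := by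
  induction n with
  | zero => rw [zero_smul, hξ.zero_right, pow_zero]
  | succ n ih => rw [succ_nsmul, hξ.2, ih, pow_succ]

lemma pow_card_right [Finite G] (hξ : IsBichar ξ) (a c : G) : ξ a c ^ Nat.card G = 1 := by
  rw [← hξ.nsmul_right, card_nsmul_eq_zero', hξ.zero_right]

lemma exists_mem_ne_one_of_closure_eq_top (hξ : IsBichar ξ) {R : Set G}
    (hR : AddSubgroup.closure R = ⊤) {a g : G} (hag : ξ a g ≠ 1) : ∃ c ∈ R, ξ a c ≠ 1 := by
  by_contra! hc
  refine hag (AddSubgroup.closure_induction (p := fun g _ => ξ a g = 1) hc (hξ.zero_right a)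
    (fun x y _ _ hx hy => ?_) (fun x _ hx => ?_) (hR ▸ AddSubgroup.mem_top g))
  · rw [hξ.2, hx, hy, one_mul]
  · rw [hξ.neg_right, hx, inv_one]

end IsBichar

lemma Complex.two_sub_sub_inv_eq_normSq {w : ℂ} (hw : ‖w‖ = 1) :
    2 - w - w⁻¹ = Complex.normSq (1 - w) := by
  have hnorm : w * (starRingEnd ℂ) w = 1 := by
    simp [Complex.mul_conj, Complex.normSq_eq_norm_sq, hw]
  rw [Complex.inv_eq_conj hw, ← Complex.mul_conj, map_sub, map_one]
  linear_combination -hnorm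

lemma Complex.sum_two_sub_sub_inv_ne_zero {ι : Type*} [Fintype ι] {w : ι → ℂ}
    (hw : ∀ i, ‖w i‖ = 1) {i₀ : ι} (hi₀ : w i₀ ≠ 1) : ∑ i, (2 - w i - (w i)⁻¹) ≠ 0 := by
  have hpos : 0 < ∑ i, Complex.normSq (1 - w i) := Finset.sum_pos'
    (fun i _ => Complex.normSq_nonneg _)
    ⟨i₀, Finset.mem_univ _, Complex.normSq_pos.2 (sub_ne_zero.2 hi₀.symm)⟩
  simp_rw [Complex.two_sub_sub_inv_eq_normSq (hw _)]
  exact_mod_cast hpos.ne'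

theorem sum_two_sub_sub_inv_ne_zero_of_pow_eq_one {F : Type*} [Field F] [CharZero F]
    {ι : Type*} [Fintype ι] {ζ : ι → F} {n : ℕ} (hn : n ≠ 0) (hζ : ∀ i, ζ i ^ n = 1)
    {i₀ : ι} (hi₀ : ζ i₀ ≠ 1) : ∑ i, (2 - ζ i - (ζ i)⁻¹) ≠ 0 := by
  let K := IntermediateField.adjoin ℚ (Set.range ζ)
  have : FiniteDimensional ℚ K := IntermediateField.finiteDimensional_adjoin <| by
    rintro _ ⟨i, rfl⟩
    exact ⟨_, Polynomial.monic_X_pow_sub_C 1 hn, by simp [hζ i]⟩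
  let φ : K →ₐ[ℚ] ℂ := IsAlgClosed.lift
  let z : ι → K := fun i => ⟨ζ i, IntermediateField.subset_adjoin ℚ _ ⟨i, rfl⟩⟩
  have hz : ∀ i, z i ^ n = 1 := fun i => Subtype.ext (hζ i)
  have hsum : ∑ i, (2 - ζ i - (ζ i)⁻¹) = algebraMap K F (∑ i, (2 - z i - (z i)⁻¹)) := by
    rw [map_sum]
    simp only [map_sub, map_inv₀, map_ofNat]
    rfl
  rw [hsum, ne_eq, map_eq_zero_iff _ (algebraMap K F).injective,
    ← map_eq_zero_iff φ (φ : K →+* ℂ).injective, map_sum]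
  simp only [map_sub, map_inv₀, map_ofNat]
  refine Complex.sum_two_sub_sub_inv_ne_zero (fun i => ?_) (i₀ := i₀) ?_
  · exact Complex.norm_eq_one_of_pow_eq_one (by rw [← map_pow, hz, map_one]) hn
  · exact fun h => hi₀ (congrArg Subtype.val (φ.toRingHom.injective (h.trans (map_one φ).symm)))

lemma LinearMap.trace_eq_sum_repr {R M ι : Type*} [CommRing R] [AddCommGroup M] [Module R M]
    [Fintype ι] (b : Module.Basis ι R M) (f : M →ₗ[R] M) :
    LinearMap.trace R M f = ∑ i, b.repr (f (b i)) i := by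
  classical
  simp only [LinearMap.trace_eq_matrix_trace R b, Matrix.trace, Matrix.diag_apply,
    LinearMap.toMatrix_apply]

theorem LinearMap.BilinForm.separatingLeft_of_basis {K M ι : Type*} [Field K] [AddCommGroup M]
    [Module K M] [Fintype ι] (b : Module.Basis ι K M) (B : LinearMap.BilinForm K M)
    (σ : ι → ι) (hne : ∀ i j, i ≠ j → B (b i) (b (σ j)) = 0)
    (hself : ∀ i, B (b i) (b (σ i)) ≠ 0) : B.SeparatingLeft := by
  intro x hx
  refine b.forall_coord_eq_zero_iff.mp fun i => ?_
  have hxi := hx (b (σ i))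
  rw [← b.sum_repr x, LinearMap.BilinForm.sum_left, Finset.sum_eq_single i
      (fun j _ hji => by rw [LinearMap.BilinForm.smul_left, hne j i hji, mul_zero])
      (fun h => absurd (Finset.mem_univ i) h), LinearMap.BilinForm.smul_left] at hxi
  exact (mul_eq_zero.mp hxi).resolve_right (hself i)

lemma LieAlgebra.isKilling_of_nondegenerate {K L : Type*} [Field K] [LieRing L] [LieAlgebra K L]
    (h : (killingForm K L).Nondegenerate) : LieAlgebra.IsKilling K L := by
  refine ⟨(LieSubmodule.toSubmodule_eq_bot _).mp ?_⟩
  exact (LieIdeal.coe_killingCompl_top K L).trans (LinearMap.separatingLeft_iff_ker_eq_bot.mp h.1)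

namespace LinearIndependent

variable {K M ι : Type*} [Field K] [AddCommGroup M] [Module K M] {v : ι → M}
  (hv : LinearIndependent K v) {s : Set ι} {N : Submodule K M} (hN : N = Submodule.span K (v '' s))

noncomputable def basisOfEqSpanImage : Module.Basis s K N :=
  (Module.Basis.span (hv.comp _ Subtype.val_injective)).map
    (LinearEquiv.ofEq _ _ (by rw [hN, Set.range_comp, Subtype.range_val]))

@[simp]
lemma coe_basisOfEqSpanImage (i : s) : (hv.basisOfEqSpanImage hN i : M) = v i := by
  simp [basisOfEqSpanImage, Module.Basis.span_apply]

lemma basisOfEqSpanImage_repr_of_coe_eq_smul [DecidableEq ι] {x : N} {r : K} {j : ι}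
    (hx : (x : M) = r • v j) (i : s) :
    (hv.basisOfEqSpanImage hN).repr x i = if j = i then r else 0 := by
  by_cases hr : r = 0
  · have : x = 0 := Subtype.ext (by simp [hx, hr])
    simp [this, hr]
  have hj : j ∈ s := by
    by_contra hj
    refine hv.notMem_span_image hj ?_
    rw [← hN, ← inv_smul_smul₀ hr (v j), ← hx]
    exact N.smul_mem _ x.2
  have : x = r • hv.basisOfEqSpanImage hN ⟨j, hj⟩ := Subtype.ext (by simp [hx])
  simp [this, Finsupp.single_apply, Subtype.ext_iff]

end LinearIndependent

lemma IsBichar.sum_two_sub_sub_inv_ne_zero {G F : Type*} [AddCommGroup G] [Finite G] [Field F]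
    [CharZero F] {β : G → G → Fˣ} (hβ : IsBichar β) {R : Set G} [Fintype R]
    (hR : AddSubgroup.closure R = ⊤) {a g : G} (hag : β a g ≠ 1) :
    ∑ c : R, ((2 : F) - β a c - ↑(β a c)⁻¹) ≠ 0 := by
  obtain ⟨c₀, hc₀, hβc₀⟩ := hβ.exists_mem_ne_one_of_closure_eq_top hR hag
  simp_rw [Units.val_inv_eq_inv_val]
  refine sum_two_sub_sub_inv_ne_zero_of_pow_eq_one (Nat.card_pos (α := G)).ne' (fun c => ?_)
    (i₀ := ⟨c₀, hc₀⟩) (fun h => hβc₀ (Units.ext h))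
  rw [← Units.val_pow_eq_pow_val, hβ.pow_card_right, Units.val_one]

section StructureConstants

variable {G F : Type*} [Field F] {ξ β : G → G → Fˣ}

def bracketCoeff (ξ : G → G → Fˣ) (a b : G) : F := ξ a b - ξ b a

lemma bracketCoeff_eq_mul (hΨ : ∀ a b : G, ξ a b * (ξ b a)⁻¹ = β a b) (a b : G) :
    bracketCoeff ξ a b = ξ b a * (β a b - 1) := by
  rw [← hΨ, Units.val_mul, Units.val_inv_eq_inv_val, bracketCoeff, mul_sub, mul_left_comm,
    mul_inv_cancel₀ (ξ b a).ne_zero, mul_one, mul_one]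

lemma bracketCoeff_neg_mul [AddCommGroup G] (hξ : IsBichar ξ) (hβ : IsAltBichar β)
    (hΨ : ∀ a b : G, ξ a b * (ξ b a)⁻¹ = β a b) (a c : G) :
    bracketCoeff ξ (-a) c * bracketCoeff ξ a (-a + c) = ξ a (-a) * (2 - β a c - ↑(β a c)⁻¹) := by
  have hξ' : ξ c (-a) * ξ (-a + c) a = ξ a (-a) := by
    rw [hξ.1, hξ.neg_right, hξ.neg_left, hξ.neg_right, mul_comm (ξ a a)⁻¹, inv_mul_cancel_left]
  have hβ' : β a (-a + c) = β a c := by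
    rw [hβ.1.2, hβ.1.neg_right, hβ.2, inv_one, one_mul]
  rw [bracketCoeff_eq_mul hΨ, bracketCoeff_eq_mul hΨ, hβ.1.neg_left, hβ', ← hξ', Units.val_mul]
  have hinv : (β a c : F) * ↑(β a c)⁻¹ = 1 := by simp
  linear_combination (↑(ξ c (-a)) * ↑(ξ (-a + c) a) : F) * hinv

end StructureConstants

section TwistedGroupAlgebra

variable {G F A : Type*} [AddCommGroup G] [Field F] [Ring A] [Algebra F A] {ξ : G → G → Fˣ}
  {u : G → A}

lemma lie_eq_bracketCoeff_smul (hmul : ∀ a b : G, u a * u b = (ξ a b : F) • u (a + b))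
    (a b : G) : ⁅u a, u b⁆ = bracketCoeff ξ a b • u (a + b) := by
  rw [Ring.lie_def, hmul, hmul, add_comm b a, bracketCoeff, sub_smul]

lemma lie_lie_eq_bracketCoeff_smul (hmul : ∀ a b : G, u a * u b = (ξ a b : F) • u (a + b))
    (a b c : G) :
    ⁅u a, ⁅u b, u c⁆⁆ = (bracketCoeff ξ b c * bracketCoeff ξ a (b + c)) • u (a + (b + c)) := by
  rw [lie_eq_bracketCoeff_smul hmul b, Ring.lie_def, mul_smul_comm, smul_mul_assoc, ← smul_sub,
    ← Ring.lie_def, lie_eq_bracketCoeff_smul hmul, smul_smul, mul_comm]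

variable {R : Set G} [Fintype R] {L : LieSubalgebra F A}

lemma killingForm_apply_eq_sum [DecidableEq G]
    (hmul : ∀ a b : G, u a * u b = (ξ a b : F) • u (a + b)) (hind : LinearIndependent F u)
    (hL : (L : Submodule F A) = Submodule.span F (u '' R)) {a b : G} (ha : u a ∈ L)
    (hb : u b ∈ L) :
    killingForm F L ⟨u a, ha⟩ ⟨u b, hb⟩ =
      ∑ c : R, if a + b = 0 then bracketCoeff ξ b c * bracketCoeff ξ a (b + c) else 0 := by
  let B : Module.Basis R F L := hind.basisOfEqSpanImage hL
  rw [killingForm_apply_apply, LinearMap.trace_eq_sum_repr B]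
  refine Finset.sum_congr rfl fun c _ => ?_
  rw [LinearMap.comp_apply, LieAlgebra.ad_apply, LieAlgebra.ad_apply,
    hind.basisOfEqSpanImage_repr_of_coe_eq_smul hL
      (r := bracketCoeff ξ b c * bracketCoeff ξ a (b + c)) (j := a + (b + c))]
  · simp only [← add_assoc, add_eq_right]
  · rw [LieSubalgebra.coe_bracket, LieSubalgebra.coe_bracket, hind.coe_basisOfEqSpanImage,
      lie_lie_eq_bracketCoeff_smul hmul]

lemma killingForm_apply_eq_zero_of_add_ne_zero
    (hmul : ∀ a b : G, u a * u b = (ξ a b : F) • u (a + b)) (hind : LinearIndependent F u)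
    (hL : (L : Submodule F A) = Submodule.span F (u '' R)) {a b : G} (ha : u a ∈ L)
    (hb : u b ∈ L) (hab : a + b ≠ 0) : killingForm F L ⟨u a, ha⟩ ⟨u b, hb⟩ = 0 := by
  classical
  simp [killingForm_apply_eq_sum hmul hind hL, hab]

lemma killingForm_apply_neg {β : G → G → Fˣ} (hξ : IsBichar ξ) (hβ : IsAltBichar β)
    (hΨ : ∀ a b : G, ξ a b * (ξ b a)⁻¹ = β a b)
    (hmul : ∀ a b : G, u a * u b = (ξ a b : F) • u (a + b)) (hind : LinearIndependent F u)
    (hL : (L : Submodule F A) = Submodule.span F (u '' R)) {a : G} (ha : u a ∈ L)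
    (hb : u (-a) ∈ L) :
    killingForm F L ⟨u a, ha⟩ ⟨u (-a), hb⟩ =
      ξ a (-a) * ∑ c : R, ((2 : F) - β a c - ↑(β a c)⁻¹) := by
  classical
  rw [killingForm_apply_eq_sum hmul hind hL, Finset.mul_sum]
  refine Finset.sum_congr rfl fun c _ => ?_
  rw [if_pos (add_neg_cancel a), bracketCoeff_neg_mul hξ hβ hΨ]

lemma killingForm_separatingLeft (hmul : ∀ a b : G, u a * u b = (ξ a b : F) • u (a + b))
    (hind : LinearIndependent F u) (hL : (L : Submodule F A) = Submodule.span F (u '' R))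
    (hR : ∀ a ∈ R, -a ∈ R)
    (hdiag : ∀ a ∈ R, ∀ ha hb, killingForm F L ⟨u a, ha⟩ ⟨u (-a), hb⟩ ≠ 0) :
    (killingForm F L).SeparatingLeft := by
  have hmem : ∀ c ∈ R, u c ∈ L := fun c hc => by
    rw [← LieSubalgebra.mem_toSubmodule, hL]
    exact Submodule.subset_span ⟨c, hc, rfl⟩
  let B : Module.Basis R F L := hind.basisOfEqSpanImage hL
  have hB : ∀ c : R, B c = ⟨u c, hmem c c.2⟩ :=
    fun c => Subtype.ext (hind.coe_basisOfEqSpanImage hL c)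
  refine LinearMap.BilinForm.separatingLeft_of_basis B _ (fun c => ⟨-c, hR c c.2⟩)
    (fun i j hij => ?_) (fun i => by rw [hB, hB]; exact hdiag i i.2 _ _)
  rw [hB, hB]
  exact killingForm_apply_eq_zero_of_add_ne_zero hmul hind hL _ _
    fun h => hij (Subtype.ext (add_neg_eq_zero.mp h))

end TwistedGroupAlgebra

theorem skewRootLie_semisimple_general
    {G : Type*} [AddCommGroup G] [Finite G]
    {F : Type*} [Field F] [CharZero F]
    {A : Type*} [Ring A] [Algebra F A]
    (β ξ : G → G → Fˣ) (hβ : IsAltBichar β)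
    (hξ : IsBichar ξ) (hΨ : ∀ a b : G, ξ a b * (ξ b a)⁻¹ = β a b)
    (R : Set G) (hR : IsSkewRootLie β R)
    (u : G → A) (hind : LinearIndependent F u)
    (hmul : ∀ a b : G, u a * u b = (ξ a b : F) • u (a + b))
    (L : LieSubalgebra F A)
    (hL : (L : Submodule F A) = Submodule.span F (u '' R)) :
    LieAlgebra.IsSemisimple F ↥L ∧
    LinearMap.BilinForm.Nondegenerate (killingForm F ↥L) ∧
    (∀ a ∈ R, ∀ b ∈ R, ∀ (ha : u a ∈ L) (hb : u b ∈ L), a + b ≠ 0 →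
      killingForm F ↥L ⟨u a, ha⟩ ⟨u b, hb⟩ = 0) ∧
    (∀ a ∈ R, ∀ (ha : u a ∈ L) (hb : u (-a) ∈ L),
      killingForm F ↥L ⟨u a, ha⟩ ⟨u (-a), hb⟩ =
        (ξ a (-a) : F) * ∑ᶠ b ∈ R, ((2 : F) - (β a b : F) - (((β a b)⁻¹ : Fˣ) : F)) ∧
      killingForm F ↥L ⟨u a, ha⟩ ⟨u (-a), hb⟩ ≠ 0) := by
  obtain ⟨hRnt, hRgen, hRneg, -⟩ := hR
  have : Fintype R := Fintype.ofFinite R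
  have : Module.Finite F L := .of_basis (hind.basisOfEqSpanImage hL : Module.Basis R F L)
  have hdiag : ∀ a (ha : u a ∈ L) (hb : u (-a) ∈ L), killingForm F L ⟨u a, ha⟩ ⟨u (-a), hb⟩ =
      ξ a (-a) * ∑ c : R, ((2 : F) - β a c - ↑(β a c)⁻¹) :=
    fun _ => killingForm_apply_neg hξ hβ hΨ hmul hind hL
  have hdiag_ne : ∀ a ∈ R, ∀ ha hb, killingForm F L ⟨u a, ha⟩ ⟨u (-a), hb⟩ ≠ 0 := by
    intro a haR ha hb
    obtain ⟨g, hag⟩ := hRnt a haR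
    rw [hdiag a ha hb]
    exact mul_ne_zero (Units.ne_zero _) (hβ.1.sum_two_sub_sub_inv_ne_zero hRgen hag)
  have hnd : (killingForm F L).Nondegenerate :=
    (LieModule.traceForm_isSymm F L L).isRefl.nondegenerate_iff_separatingLeft.mpr
      (killingForm_separatingLeft hmul hind hL hRneg hdiag_ne)
  have := LieAlgebra.isKilling_of_nondegenerate hnd
  refine ⟨inferInstance, hnd,
    fun a _ b _ => killingForm_apply_eq_zero_of_add_ne_zero hmul hind hL,
    fun a haR ha hb => ⟨?_, hdiag_ne a haR ha hb⟩⟩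
  rw [hdiag a ha hb, ← finsum_set_coe_eq_finsum_mem, finsum_eq_sum_of_fintype]

/-- Let `G` be a finite abelian group and `(G,β,R)` a skew root system of Lie type, `ξ` a
bicharacter with `Ψ(ξ)=β`, and `L = L(R) = ⊕_{a∈R} F u_a` the corresponding Lie subalgebra
of the twisted group algebra `A` (with commutator bracket).  Then `L(R)` is a semisimple
Lie algebra; specifically its Killing form `κ` satisfies `κ(u_a,u_b) = 0` for `a+b ≠ 0`
and `κ(u_a,u_{-a}) = ξ(a,-a) ∑_{b∈R} (2 - β(a,b) - β(a,b)⁻¹) ≠ 0`, hence `κ` is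
nondegenerate. -/
theorem skewRootLie_semisimple
    {G : Type*} [AddCommGroup G] [Finite G]
    {F : Type*} [Field F] [IsAlgClosed F] [CharZero F]
    {A : Type*} [Ring A] [Algebra F A]
    (β ξ : G → G → Fˣ) (hβ : IsAltBichar β) (hβnt : ∃ g h : G, β g h ≠ 1)
    (hξ : IsBichar ξ) (hΨ : ∀ a b : G, ξ a b * (ξ b a)⁻¹ = β a b)
    (R : Set G) (hR : IsSkewRootLie β R)
    (u : G → A) (hind : LinearIndependent F u)
    (hspan : Submodule.span F (Set.range u) = ⊤) (hone : u 0 = 1)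
    (hmul : ∀ a b : G, u a * u b = (ξ a b : F) • u (a + b))
    (L : LieSubalgebra F A)
    (hL : (L : Submodule F A) = Submodule.span F (u '' R)) :
    LieAlgebra.IsSemisimple F ↥L ∧
    LinearMap.BilinForm.Nondegenerate (killingForm F ↥L) ∧
    (∀ a ∈ R, ∀ b ∈ R, ∀ (ha : u a ∈ L) (hb : u b ∈ L), a + b ≠ 0 →
      killingForm F ↥L ⟨u a, ha⟩ ⟨u b, hb⟩ = 0) ∧
    (∀ a ∈ R, ∀ (ha : u a ∈ L) (hb : u (-a) ∈ L),
      killingForm F ↥L ⟨u a, ha⟩ ⟨u (-a), hb⟩ =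
        (ξ a (-a) : F) * ∑ᶠ b ∈ R, ((2 : F) - (β a b : F) - (((β a b)⁻¹ : Fˣ) : F)) ∧
      killingForm F ↥L ⟨u a, ha⟩ ⟨u (-a), hb⟩ ≠ 0) :=
  skewRootLie_semisimple_general β ξ hβ hξ hΨ R hR u hind hmul L hL
end

section
/- Let G = Z_2^n with standard basis e_1,…,e_n, and define the alternating bicharacter β(a,b) = (−1)^{(Σa_i)(Σb_i) − Σ a_i b_i}, so β(e_i,e_j) = −1 for i≠j and 1 for i=j. Then R^+ = {0, e_1, …, e_n} is a skew root system of Jordan type in (G,β), and the corresponding Jordan algebra J(R^+) is isomorphic to F·1 ⊕ V, the simple Jordan algebra of a nonsingular symmetric bilinear form on an n-dimensional space V (n ≥ 2). -/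
/-!
Write `eᵢ` for the standard basis of `(ZMod 2)ⁿ`. The bicharacter is `β = (-1)^B` for the
`ZMod 2`-bilinear form `B(a, b) = Σ_{i ≠ j} aᵢ bⱼ`, which is alternating. Since
`β(eᵢ, eⱼ) = -1` for `i ≠ j`, the only sums the Jordan-type axiom asks for are `0 + b = b`
and `eᵢ + eᵢ = 0`. In the twisted group algebra `u_a u_b + u_b u_a = (ξ(a, b) + ξ(b, a)) u_{a+b}`,
and `ξ(eᵢ, eⱼ) = (-1)^{[j < i]}`: the two signs cancel for `i ≠ j` and add up to `2` for
`i = j`, where `u_{2eᵢ} = u_0 = 1`.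
-/

lemma neg_one_pow_val_add {M : Type*} [Monoid M] [HasDistribNeg M] (x y : ZMod 2) :
    (-1 : M) ^ (x + y).val = (-1) ^ x.val * (-1) ^ y.val := by
  rw [← pow_add]
  exact neg_one_pow_congr (by rw [ZMod.val_add, Nat.even_iff, Nat.even_iff, Nat.mod_mod])

section Bicharacter

variable {G : Type*} [AddCommGroup G] [Module (ZMod 2) G] {F : Type*} [Field F]

lemma isBichar_neg_one_pow_val (B : LinearMap.BilinForm (ZMod 2) G) :
    IsBichar fun a b ↦ (-1 : Fˣ) ^ (B a b).val :=
  ⟨fun a b c ↦ by simp only [map_add, LinearMap.add_apply, neg_one_pow_val_add],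
   fun a b c ↦ by simp only [map_add, neg_one_pow_val_add]⟩

lemma isAltBichar_neg_one_pow_val {B : LinearMap.BilinForm (ZMod 2) G} (hB : B.IsAlt) :
    IsAltBichar fun a b ↦ (-1 : Fˣ) ^ (B a b).val :=
  ⟨isBichar_neg_one_pow_val B, fun g ↦ by simp [hB.self_eq_zero g]⟩

lemma isSkewRootJordan_zero_union_range {ι : Type*} {e : ι → G}
    (he : AddSubgroup.closure (Set.range e) = ⊤) {β : G → G → Fˣ}
    (hβ : ∀ i j, i ≠ j → β (e i) (e j) = -1) :
    IsSkewRootJordan β ({0} ∪ Set.range e) := by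
  refine ⟨top_unique ?_, fun a ha ↦ by rwa [ZModModule.neg_eq_self], ?_⟩
  · exact he ▸ AddSubgroup.closure_mono Set.subset_union_right
  rintro _ (rfl | ⟨i, rfl⟩) b hb hβib
  · rwa [zero_add]
  rcases hb with rfl | ⟨j, rfl⟩
  · simp
  obtain rfl | hij := eq_or_ne i j
  · simp [ZModModule.add_self]
  · exact absurd (hβ i j hij) hβib

end Bicharacter

lemma closure_range_single_one_eq_top (ι : Type*) [Fintype ι] [DecidableEq ι]
    (m : ℕ) [NeZero m] :
    AddSubgroup.closure (Set.range fun i : ι ↦ Pi.single i (1 : ZMod m)) = ⊤ := by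
  refine eq_top_iff.2 fun g _ ↦
    AddSubgroup.mem_closure_range_iff_of_fintype.2 ⟨fun i ↦ (g i).val, ?_⟩
  ext k
  simp only [Finset.sum_apply, Pi.smul_apply, Pi.single_apply, smul_ite, smul_zero,
    Finset.sum_ite_eq, Finset.mem_univ, if_true, zsmul_one, Int.cast_natCast,
    ZMod.natCast_zmod_val]

def offDiagonalForm (n : ℕ) : LinearMap.BilinForm (ZMod 2) (Fin n → ZMod 2) :=
  LinearMap.mk₂ (ZMod 2) (fun a b ↦ (∑ i, a i) * (∑ i, b i) - ∑ i, a i * b i)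
    (fun a a' b ↦ by simp only [Pi.add_apply, add_mul, Finset.sum_add_distrib]; ring)
    (fun c a b ↦ by simp only [Pi.smul_apply, smul_eq_mul, mul_assoc, ← Finset.mul_sum]; ring)
    (fun a b b' ↦ by simp only [Pi.add_apply, mul_add, Finset.sum_add_distrib]; ring)
    (fun c a b ↦ by
      simp only [Pi.smul_apply, smul_eq_mul, mul_left_comm _ c, ← Finset.mul_sum]; ring)

lemma offDiagonalForm_isAlt (n : ℕ) : (offDiagonalForm n).IsAlt := fun a ↦ by
  have hidem : ∀ x : ZMod 2, x * x = x := by decide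
  simp [offDiagonalForm, hidem]

lemma offDiagonalForm_single_single {n : ℕ} (i j : Fin n) :
    offDiagonalForm n (Pi.single i 1) (Pi.single j 1) = if i = j then 0 else 1 := by
  by_cases hij : i = j
  · simp [offDiagonalForm, Pi.single_apply, hij]
  · simp [offDiagonalForm, Pi.single_apply, hij, Ne.symm hij]

def crossInversions {n : ℕ} (a b : Fin n → ZMod 2) : ℕ :=
  ∑ i, ∑ j, if j < i then (a i).val * (b j).val else 0

lemma crossInversions_single_single {n : ℕ} (i j : Fin n) :
    crossInversions (Pi.single i 1) (Pi.single j 1) = if j < i then 1 else 0 := by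
  rw [crossInversions, Finset.sum_eq_single i, Finset.sum_eq_single j] <;>
    simp +contextual [Pi.single_apply, ZMod.val_one]

lemma neg_one_pow_crossInversions_add_swap {n : ℕ} {F : Type*} [Ring F] (i j : Fin n) :
    (((-1 : Fˣ) ^ crossInversions (Pi.single i 1) (Pi.single j 1) : Fˣ) : F) +
      (((-1 : Fˣ) ^ crossInversions (Pi.single j 1) (Pi.single i 1) : Fˣ) : F) =
        if i = j then 2 else 0 := by
  rcases lt_trichotomy i j with h | rfl | h
  · simp [crossInversions_single_single, h, h.ne, not_lt_of_gt h]
  · norm_num [crossInversions_single_single]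
  · simp [crossInversions_single_single, h, h.ne', not_lt_of_gt h]

lemma mul_add_mul_swap_eq_smul {G : Type*} [AddCommGroup G] {F : Type*} [CommSemiring F]
    {A : Type*} [Semiring A] [Algebra F A] {ξ : G → G → Fˣ} {u : G → A}
    (hmul : ∀ a b, u a * u b = (ξ a b : F) • u (a + b)) (a b : G) :
    u a * u b + u b * u a = ((ξ a b : F) + ξ b a) • u (a + b) := by
  rw [hmul, hmul, add_comm b a, add_smul]

theorem skewRootJordan_clifford_general
    {F : Type*} [Field F] [CharZero F]
    {A : Type*} [Ring A] [Algebra F A]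
    (n : ℕ)
    (β : (Fin n → ZMod 2) → (Fin n → ZMod 2) → Fˣ)
    (hβ : ∀ a b, β a b =
      (-1 : Fˣ) ^ (((∑ i, a i) * (∑ i, b i) - ∑ i, a i * b i : ZMod 2)).val)
    (ξ : (Fin n → ZMod 2) → (Fin n → ZMod 2) → Fˣ)
    (hξ : ∀ a b, ξ a b =
      (-1 : Fˣ) ^ (∑ i : Fin n, ∑ j : Fin n, if j < i then (a i).val * (b j).val else 0))
    (u : (Fin n → ZMod 2) → A)
    (hone : u 0 = 1)
    (hmul : ∀ a b, u a * u b = (ξ a b : F) • u (a + b)) :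
    IsAltBichar β ∧
    IsSkewRootJordan β
      ({0} ∪ Set.range (fun i : Fin n => Pi.single i (1 : ZMod 2))) ∧
    (∀ i j : Fin n,
      (1/2 : F) • (u (Pi.single i 1) * u (Pi.single j 1) +
                   u (Pi.single j 1) * u (Pi.single i 1)) =
        if i = j then (1 : A) else 0) := by
  obtain rfl : β = fun a b ↦ (-1 : Fˣ) ^ (offDiagonalForm n a b).val := funext₂ hβ
  refine ⟨isAltBichar_neg_one_pow_val (offDiagonalForm_isAlt n),
    isSkewRootJordan_zero_union_range (closure_range_single_one_eq_top _ _) fun i j hij ↦ ?_,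
    fun i j ↦ ?_⟩
  · simp [offDiagonalForm_single_single, hij, ZMod.val_one]
  · have hξ' : ∀ a b, ξ a b = (-1 : Fˣ) ^ crossInversions a b := hξ
    rw [mul_add_mul_swap_eq_smul hmul, hξ', hξ', neg_one_pow_crossInversions_add_swap]
    split_ifs with hij
    · rw [hij, ZModModule.add_self, hone, smul_smul]; norm_num
    · simp

/-- Let `G = ℤ₂ⁿ` (`n ≥ 2`) with standard basis `e i = Pi.single i 1`, and let
`β(a,b) = (-1)^{(Σaᵢ)(Σbᵢ) - Σaᵢbᵢ}`, so that `β(eᵢ,eⱼ) = -1` for `i ≠ j` and `1` for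
`i = j`.  Then `R⁺ = {0, e₁, …, e_n}` is a skew root system of Jordan type in `(G,β)`, and
the corresponding Jordan algebra `J(R⁺)` (inside the twisted group algebra, which is the
Clifford algebra `C(V)` via `u_{Σlᵢeᵢ} ↦ v₁^{l₁}⋯v_n^{l_n}`) is `F·1 ⊕ V`, the simple
Jordan algebra of a nonsingular symmetric bilinear form:  the `vᵢ = u (e i)` satisfy
`vᵢ ∘ vⱼ = δᵢⱼ · 1`. -/
theorem skewRootJordan_clifford
    {F : Type*} [Field F] [IsAlgClosed F] [CharZero F]
    {A : Type*} [Ring A] [Algebra F A]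
    (n : ℕ) (hn : 2 ≤ n)
    (β : (Fin n → ZMod 2) → (Fin n → ZMod 2) → Fˣ)
    (hβ : ∀ a b, β a b =
      (-1 : Fˣ) ^ (((∑ i, a i) * (∑ i, b i) - ∑ i, a i * b i : ZMod 2)).val)
    (ξ : (Fin n → ZMod 2) → (Fin n → ZMod 2) → Fˣ)
    (hξ : ∀ a b, ξ a b =
      (-1 : Fˣ) ^ (∑ i : Fin n, ∑ j : Fin n, if j < i then (a i).val * (b j).val else 0))
    (u : (Fin n → ZMod 2) → A)
    (hind : LinearIndependent F u) (hone : u 0 = 1)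
    (hmul : ∀ a b, u a * u b = (ξ a b : F) • u (a + b)) :
    IsAltBichar β ∧
    IsSkewRootJordan β
      ({0} ∪ Set.range (fun i : Fin n => Pi.single i (1 : ZMod 2))) ∧
    (∀ i j : Fin n,
      (1/2 : F) • (u (Pi.single i 1) * u (Pi.single j 1) +
                   u (Pi.single j 1) * u (Pi.single i 1)) =
        if i = j then (1 : A) else 0) :=
  skewRootJordan_clifford_general n β hβ ξ hξ u hone hmul
end
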